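/- arXiv:1802.05912 — 5 statements merged into one kernel-verified Lean document; each statement's English description precedes it below -/
import Mathlib

section
/- Let m ≥ 2 be an integer and let ρ : [0,T] × 𝕋 → [0,1] be a continuous weak solution of the porous medium equation whose pressure ϖ = (m/(m−1)) ρ^{m−1} is Lipschitz continuous on [0,T]×𝕋, and which satisfies the retention property: P_s ⊆ P_t whenever 0 ≤ s ≤ t ≤ T, where P_t = { u ∈ 𝕋 : ρ(t,u) > 0 }. Let t ∈ (0,T] and let (a,b) be a connected component of P_t, i.e. ρ(t,a) = ρ(t,b) = 0 and ρ(t,u) > 0 for all u ∈ (a,b). Then for every s ∈ [0,t] one has ρ(s,a) = ρ(s,b) = 0 and ∫_a^b ρ(s,u) du = ∫_a^b ρ(t,u) du > 0. -/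
open MeasureTheory Set Function Filter

noncomputable section

/-- The positivity set of a (periodic) profile, viewed in the torus `𝕋 = ℝ/ℤ`. -/
def posSet (f : ℝ → ℝ) : Set UnitAddCircle :=
  (fun u : ℝ => (u : UnitAddCircle)) '' {u : ℝ | 0 < f u}

/-- The set of connected components of a subset of the torus. -/
def componentsOf (S : Set UnitAddCircle) : Set (Set UnitAddCircle) :=
  {C : Set UnitAddCircle | ∃ x ∈ S, C = connectedComponentIn S x}

/-- `ρ` is a weak solution of the porous medium equation `∂_t ρ = ∂_uu (ρ^m)` on `[0,T] × 𝕋`;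
the torus is represented by `1`-periodic functions on `ℝ`, `w` plays the role of the
distributional space derivative `∂_u (ρ^m) ∈ L²([0,T] × 𝕋)`, and test functions are `C¹`
functions vanishing for `t` near `T`. -/
def IsWeakSolPMEOn (m : ℕ) (T : ℝ) (ρ : ℝ → ℝ → ℝ) : Prop :=
  (∀ t, Periodic (ρ t) 1) ∧ (∀ t u, ρ t u ∈ Icc (0:ℝ) 1) ∧
  ∃ w : ℝ → ℝ → ℝ, Measurable (uncurry w) ∧ (∀ t, Periodic (w t) 1) ∧
    (∫⁻ t in Ioc (0:ℝ) T, ∫⁻ u in Ioc (0:ℝ) 1, ENNReal.ofReal ((w t u)^2)) < ⊤ ∧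
    (∀ ξ : ℝ → ℝ → ℝ, ContDiff ℝ 1 (uncurry ξ) → (∀ t, Periodic (ξ t) 1) →
      (∃ A : ℝ, A < T ∧ ∀ t, A ≤ t → ∀ u, ξ t u = 0) →
      (∫ t in Ioc (0:ℝ) T, ∫ u in Ioc (0:ℝ) 1, (ρ t u)^m * deriv (ξ t) u)
        = - ∫ t in Ioc (0:ℝ) T, ∫ u in Ioc (0:ℝ) 1, w t u * ξ t u) ∧
    (∀ ξ : ℝ → ℝ → ℝ, ContDiff ℝ 1 (uncurry ξ) → (∀ t, Periodic (ξ t) 1) →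
      (∃ A : ℝ, A < T ∧ ∀ t, A ≤ t → ∀ u, ξ t u = 0) →
      (∫ t in Ioc (0:ℝ) T, ∫ u in Ioc (0:ℝ) 1, ρ t u * deriv (fun s => ξ s u) t)
        + (∫ u in Ioc (0:ℝ) 1, ρ 0 u * ξ 0 u)
        - (∫ t in Ioc (0:ℝ) T, ∫ u in Ioc (0:ℝ) 1, w t u * deriv (ξ t) u) = 0)



open Topology

namespace PME

lemma eq_zero_of_left {f : ℝ → ℝ} {x : ℝ} (hf : ContinuousAt f x)
    (h : ∀ y, y < x → f y = 0) : f x = 0 := by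
  have h1 : Tendsto f (𝓝[<] x) (𝓝 (f x)) :=
    (hf.continuousWithinAt (s := Iio x)).tendsto
  have h2 : Tendsto f (𝓝[<] x) (𝓝 (0:ℝ)) := by
    have : f =ᶠ[𝓝[<] x] fun _ => (0:ℝ) := by
      filter_upwards [self_mem_nhdsWithin] with y hy
      exact h y hy
    rw [tendsto_congr' this]
    exact tendsto_const_nhds
  exact tendsto_nhds_unique h1 h2

lemma eq_zero_of_right {f : ℝ → ℝ} {x : ℝ} (hf : ContinuousAt f x)
    (h : ∀ y, x < y → f y = 0) : f x = 0 := by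
  have h1 : Tendsto f (𝓝[>] x) (𝓝 (f x)) :=
    (hf.continuousWithinAt (s := Ioi x)).tendsto
  have h2 : Tendsto f (𝓝[>] x) (𝓝 (0:ℝ)) := by
    have : f =ᶠ[𝓝[>] x] fun _ => (0:ℝ) := by
      filter_upwards [self_mem_nhdsWithin] with y hy
      exact h y hy
    rw [tendsto_congr' this]
    exact tendsto_const_nhds
  exact tendsto_nhds_unique h1 h2

def r : ℝ → ℝ := Real.smoothTransition

lemma r_zero_of_nonpos {x : ℝ} (hx : x ≤ 0) : r x = 0 :=
  Real.smoothTransition.zero_of_nonpos hx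

lemma r_one_of_one_le {x : ℝ} (hx : 1 ≤ x) : r x = 1 :=
  Real.smoothTransition.one_of_one_le hx

lemma r_nonneg (x : ℝ) : 0 ≤ r x := Real.smoothTransition.nonneg x

lemma r_le_one (x : ℝ) : r x ≤ 1 := Real.smoothTransition.le_one x

lemma abs_r_le (x : ℝ) : |r x| ≤ 1 := abs_le.2 ⟨by linarith [r_nonneg x], r_le_one x⟩

lemma r_contDiff {n : ℕ∞} : ContDiff ℝ n r := Real.smoothTransition.contDiff

lemma r_cont : Continuous r := (r_contDiff (n := 0)).continuous

lemma r_diff : Differentiable ℝ r := (r_contDiff (n := 1)).differentiable (by simp)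

lemma dr_contDiff : ContDiff ℝ 1 (deriv r) := by
  have h := (contDiff_succ_iff_deriv (n := 1)).1 ((r_contDiff (n := 2)) : ContDiff ℝ (1 + 1) r)
  exact h.2.2

lemma dr_cont : Continuous (deriv r) := dr_contDiff.continuous

lemma dr_diff : Differentiable ℝ (deriv r) := dr_contDiff.differentiable (by simp)

lemma ddr_cont : Continuous (deriv (deriv r)) := dr_contDiff.continuous_deriv le_rfl

lemma dr_zero_of_neg {x : ℝ} (hx : x < 0) : deriv r x = 0 := by
  have h : r =ᶠ[𝓝 x] fun _ => (0:ℝ) := by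
    filter_upwards [Iio_mem_nhds hx] with y hy
    exact r_zero_of_nonpos hy.le
  rw [h.deriv_eq, deriv_const]

lemma dr_zero_of_gt {x : ℝ} (hx : 1 < x) : deriv r x = 0 := by
  have h : r =ᶠ[𝓝 x] fun _ => (1:ℝ) := by
    filter_upwards [Ioi_mem_nhds hx] with y hy
    exact r_one_of_one_le hy.le
  rw [h.deriv_eq, deriv_const]

lemma dr_zero_of_nonpos {x : ℝ} (hx : x ≤ 0) : deriv r x = 0 := by
  rcases lt_or_eq_of_le hx with h | h
  · exact dr_zero_of_neg h
  · subst h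
    exact eq_zero_of_left dr_cont.continuousAt fun y hy => dr_zero_of_neg hy

lemma dr_zero_of_one_le {x : ℝ} (hx : 1 ≤ x) : deriv r x = 0 := by
  rcases lt_or_eq_of_le hx with h | h
  · exact dr_zero_of_gt h
  · subst h
    exact eq_zero_of_right dr_cont.continuousAt fun y hy => dr_zero_of_gt hy

lemma ddr_zero_of_neg {x : ℝ} (hx : x < 0) : deriv (deriv r) x = 0 := by
  have h : deriv r =ᶠ[𝓝 x] fun _ => (0:ℝ) := by
    filter_upwards [Iio_mem_nhds hx] with y hy
    exact dr_zero_of_neg hy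
  rw [h.deriv_eq, deriv_const]

lemma ddr_zero_of_gt {x : ℝ} (hx : 1 < x) : deriv (deriv r) x = 0 := by
  have h : deriv r =ᶠ[𝓝 x] fun _ => (0:ℝ) := by
    filter_upwards [Ioi_mem_nhds hx] with y hy
    exact dr_zero_of_gt hy
  rw [h.deriv_eq, deriv_const]

lemma ddr_zero_of_nonpos {x : ℝ} (hx : x ≤ 0) : deriv (deriv r) x = 0 := by
  rcases lt_or_eq_of_le hx with h | h
  · exact ddr_zero_of_neg h
  · subst h
    exact eq_zero_of_left ddr_cont.continuousAt fun y hy => ddr_zero_of_neg hy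

lemma ddr_zero_of_one_le {x : ℝ} (hx : 1 ≤ x) : deriv (deriv r) x = 0 := by
  rcases lt_or_eq_of_le hx with h | h
  · exact ddr_zero_of_gt h
  · subst h
    exact eq_zero_of_right ddr_cont.continuousAt fun y hy => ddr_zero_of_gt hy

lemma exists_bound_aux {f : ℝ → ℝ} (hf : Continuous f)
    (h0 : ∀ x, x < 0 → f x = 0) (h1 : ∀ x, 1 < x → f x = 0) :
    ∃ B : ℝ, 0 ≤ B ∧ ∀ x, |f x| ≤ B := by
  obtain ⟨C, hC⟩ := (isCompact_Icc (a := (0:ℝ)) (b := 1)).exists_bound_of_continuousOn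
    hf.continuousOn
  refine ⟨max C 0, le_max_right _ _, fun x => ?_⟩
  rcases le_or_gt x 1 with hx1 | hx1
  · rcases le_or_gt 0 x with hx0 | hx0
    · exact le_trans (hC x ⟨hx0, hx1⟩) (le_max_left _ _)
    · simp [h0 x hx0]
  · simp [h1 x hx1]

/-- a bound for `|deriv r|` -/
def B1 : ℝ := (exists_bound_aux dr_cont (fun _ h => dr_zero_of_neg h)
  (fun _ h => dr_zero_of_gt h)).choose

lemma B1_nonneg : 0 ≤ B1 := (exists_bound_aux dr_cont (fun _ h => dr_zero_of_neg h)
  (fun _ h => dr_zero_of_gt h)).choose_spec.1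

lemma abs_dr_le (x : ℝ) : |deriv r x| ≤ B1 := (exists_bound_aux dr_cont
  (fun _ h => dr_zero_of_neg h) (fun _ h => dr_zero_of_gt h)).choose_spec.2 x

/-- a bound for `|deriv (deriv r)|` -/
def B2 : ℝ := (exists_bound_aux ddr_cont (fun _ h => ddr_zero_of_neg h)
  (fun _ h => ddr_zero_of_gt h)).choose

lemma B2_nonneg : 0 ≤ B2 := (exists_bound_aux ddr_cont (fun _ h => ddr_zero_of_neg h)
  (fun _ h => ddr_zero_of_gt h)).choose_spec.1

lemma abs_ddr_le (x : ℝ) : |deriv (deriv r) x| ≤ B2 := (exists_bound_aux ddr_cont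
  (fun _ h => ddr_zero_of_neg h) (fun _ h => ddr_zero_of_gt h)).choose_spec.2 x

lemma periodic_deriv (f : ℝ → ℝ) (hf : Periodic f 1) : Periodic (deriv f) 1 := by
  intro x
  have h1 : (fun y => f (y + 1)) = f := funext fun y => hf y
  calc deriv f (x + 1) = deriv (fun y => f (y + 1)) x := (deriv_comp_add_const f 1 x).symm
    _ = deriv f x := by rw [h1]


/-! ### bump function -/

def l1 (a ε u : ℝ) : ℝ := (u - a) / ε
def l2 (b ε u : ℝ) : ℝ := (b - u) / ε

def chi (a b ε u : ℝ) : ℝ := r (l1 a ε u) * r (l2 b ε u)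

def dchi (a b ε u : ℝ) : ℝ :=
  (deriv r (l1 a ε u) * r (l2 b ε u) - r (l1 a ε u) * deriv r (l2 b ε u)) / ε

def ddchi (a b ε u : ℝ) : ℝ :=
  (deriv (deriv r) (l1 a ε u) * r (l2 b ε u) - 2 * deriv r (l1 a ε u) * deriv r (l2 b ε u)
    + r (l1 a ε u) * deriv (deriv r) (l2 b ε u)) / ε ^ 2

variable {a b ε c : ℝ}

lemma l1_nonpos (hε : 0 < ε) {u : ℝ} (h : u ≤ a) : l1 a ε u ≤ 0 :=
  div_nonpos_iff.2 (Or.inr ⟨sub_nonpos.2 h, hε.le⟩)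

lemma l2_nonpos (hε : 0 < ε) {u : ℝ} (h : b ≤ u) : l2 b ε u ≤ 0 :=
  div_nonpos_iff.2 (Or.inr ⟨sub_nonpos.2 h, hε.le⟩)

lemma hasDerivAt_l1 (u : ℝ) : HasDerivAt (l1 a ε) (1 / ε) u := by
  exact (by simpa using ((hasDerivAt_id u).sub_const a).div_const ε :
    HasDerivAt (fun x => (x - a) / ε) (1 / ε) u)

lemma hasDerivAt_l2 (u : ℝ) : HasDerivAt (l2 b ε) (-1 / ε) u := by
  exact (by simpa using ((hasDerivAt_id u).const_sub b).div_const ε :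
    HasDerivAt (fun x => (b - x) / ε) (-1 / ε) u)

lemma hasDerivAt_chi (hε : ε ≠ 0) (u : ℝ) : HasDerivAt (chi a b ε) (dchi a b ε u) u := by
  have h1 : HasDerivAt (fun v => r (l1 a ε v)) (deriv r (l1 a ε u) * (1 / ε)) u :=
    (r_diff.differentiableAt.hasDerivAt).comp u (hasDerivAt_l1 u)
  have h2 : HasDerivAt (fun v => r (l2 b ε v)) (deriv r (l2 b ε u) * (-1 / ε)) u :=
    (r_diff.differentiableAt.hasDerivAt).comp u (hasDerivAt_l2 u)
  have h := h1.mul h2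
  refine h.congr_deriv ?_
  unfold dchi
  field_simp
  ring

lemma hasDerivAt_dchi (hε : ε ≠ 0) (u : ℝ) : HasDerivAt (dchi a b ε) (ddchi a b ε u) u := by
  have h1 : HasDerivAt (fun v => r (l1 a ε v)) (deriv r (l1 a ε u) * (1 / ε)) u :=
    (r_diff.differentiableAt.hasDerivAt).comp u (hasDerivAt_l1 u)
  have h2 : HasDerivAt (fun v => r (l2 b ε v)) (deriv r (l2 b ε u) * (-1 / ε)) u :=
    (r_diff.differentiableAt.hasDerivAt).comp u (hasDerivAt_l2 u)
  have h1' : HasDerivAt (fun v => deriv r (l1 a ε v)) (deriv (deriv r) (l1 a ε u) * (1 / ε)) u :=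
    (dr_diff.differentiableAt.hasDerivAt).comp u (hasDerivAt_l1 u)
  have h2' : HasDerivAt (fun v => deriv r (l2 b ε v)) (deriv (deriv r) (l2 b ε u) * (-1 / ε)) u :=
    (dr_diff.differentiableAt.hasDerivAt).comp u (hasDerivAt_l2 u)
  have h := ((h1'.mul h2).sub (h1.mul h2')).div_const ε
  refine h.congr_deriv ?_
  unfold ddchi
  field_simp
  ring

lemma deriv_chi (hε : ε ≠ 0) : deriv (chi a b ε) = dchi a b ε :=
  funext fun u => (hasDerivAt_chi hε u).deriv

lemma deriv_dchi (hε : ε ≠ 0) : deriv (dchi a b ε) = ddchi a b ε :=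
  funext fun u => (hasDerivAt_dchi hε u).deriv

lemma contDiff_chi : ContDiff ℝ 2 (chi a b ε) := by
  have hl1 : ContDiff ℝ 2 (l1 a ε) := (contDiff_id.sub contDiff_const).div_const ε
  have hl2 : ContDiff ℝ 2 (l2 b ε) := (contDiff_const.sub contDiff_id).div_const ε
  exact ((r_contDiff (n := 2)).comp hl1).mul ((r_contDiff (n := 2)).comp hl2)

lemma chi_cont : Continuous (chi a b ε) := contDiff_chi.continuous

lemma chi_zero_left (hε : 0 < ε) {u : ℝ} (h : u ≤ a) : chi a b ε u = 0 := by
  unfold chi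
  rw [r_zero_of_nonpos (l1_nonpos hε h), zero_mul]

lemma chi_zero_right (hε : 0 < ε) {u : ℝ} (h : b ≤ u) : chi a b ε u = 0 := by
  unfold chi
  rw [r_zero_of_nonpos (l2_nonpos hε h), mul_zero]

lemma chi_one (hε : 0 < ε) {u : ℝ} (h1 : a + ε ≤ u) (h2 : u ≤ b - ε) : chi a b ε u = 1 := by
  have e1 : (1:ℝ) ≤ l1 a ε u := (one_le_div hε).2 (by linarith)
  have e2 : (1:ℝ) ≤ l2 b ε u := (one_le_div hε).2 (by linarith)
  unfold chi
  rw [r_one_of_one_le e1, r_one_of_one_le e2, mul_one]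

lemma chi_nonneg (u : ℝ) : 0 ≤ chi a b ε u := mul_nonneg (r_nonneg _) (r_nonneg _)

lemma chi_le_one (u : ℝ) : chi a b ε u ≤ 1 :=
  mul_le_one₀ (r_le_one _) (r_nonneg _) (r_le_one _)

lemma ddchi_zero_left (hε : 0 < ε) {u : ℝ} (h : u ≤ a) : ddchi a b ε u = 0 := by
  unfold ddchi
  rw [r_zero_of_nonpos (l1_nonpos hε h), ddr_zero_of_nonpos (l1_nonpos hε h),
    dr_zero_of_nonpos (l1_nonpos hε h)]
  ring

lemma ddchi_zero_right (hε : 0 < ε) {u : ℝ} (h : b ≤ u) : ddchi a b ε u = 0 := by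
  unfold ddchi
  rw [r_zero_of_nonpos (l2_nonpos hε h), ddr_zero_of_nonpos (l2_nonpos hε h),
    dr_zero_of_nonpos (l2_nonpos hε h)]
  ring

lemma ddchi_zero_mid (hε : 0 < ε) {u : ℝ} (h1 : a + ε ≤ u) (h2 : u ≤ b - ε) :
    ddchi a b ε u = 0 := by
  have e1 : (1:ℝ) ≤ l1 a ε u := (one_le_div hε).2 (by linarith)
  have e2 : (1:ℝ) ≤ l2 b ε u := (one_le_div hε).2 (by linarith)
  unfold ddchi
  rw [ddr_zero_of_one_le e1, ddr_zero_of_one_le e2, dr_zero_of_one_le e1]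
  ring

lemma abs_ddchi_le (hε : 0 < ε) (u : ℝ) :
    |ddchi a b ε u| ≤ (2 * B2 + 2 * B1 ^ 2) / ε ^ 2 := by
  unfold ddchi
  rw [abs_div, abs_of_nonneg (by positivity : (0:ℝ) ≤ ε ^ 2)]
  gcongr
  have e1 : |deriv (deriv r) (l1 a ε u) * r (l2 b ε u)| ≤ B2 := by
    rw [abs_mul]
    calc |deriv (deriv r) (l1 a ε u)| * |r (l2 b ε u)| ≤ B2 * 1 :=
      mul_le_mul (abs_ddr_le _) (abs_r_le _) (abs_nonneg _) B2_nonneg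
    _ = B2 := mul_one _
  have e3 : |r (l1 a ε u) * deriv (deriv r) (l2 b ε u)| ≤ B2 := by
    rw [abs_mul]
    calc |r (l1 a ε u)| * |deriv (deriv r) (l2 b ε u)| ≤ 1 * B2 :=
      mul_le_mul (abs_r_le _) (abs_ddr_le _) (abs_nonneg _) zero_le_one
    _ = B2 := one_mul _
  have e2 : |2 * deriv r (l1 a ε u) * deriv r (l2 b ε u)| ≤ 2 * B1 ^ 2 := by
    rw [abs_mul, abs_mul, abs_two]
    have := abs_dr_le (l1 a ε u)
    have := abs_dr_le (l2 b ε u)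
    have := abs_nonneg (deriv r (l1 a ε u))
    have := abs_nonneg (deriv r (l2 b ε u))
    nlinarith
  calc |deriv (deriv r) (l1 a ε u) * r (l2 b ε u) - 2 * deriv r (l1 a ε u) * deriv r (l2 b ε u)
        + r (l1 a ε u) * deriv (deriv r) (l2 b ε u)|
      ≤ |deriv (deriv r) (l1 a ε u) * r (l2 b ε u) - 2 * deriv r (l1 a ε u) * deriv r (l2 b ε u)|
        + |r (l1 a ε u) * deriv (deriv r) (l2 b ε u)| := abs_add_le _ _
    _ ≤ (|deriv (deriv r) (l1 a ε u) * r (l2 b ε u)|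
        + |2 * deriv r (l1 a ε u) * deriv r (l2 b ε u)|)
        + |r (l1 a ε u) * deriv (deriv r) (l2 b ε u)| := by gcongr; exact abs_sub _ _
    _ ≤ (B2 + 2 * B1 ^ 2) + B2 := by gcongr
    _ = 2 * B2 + 2 * B1 ^ 2 := by ring


/-! ### periodization -/

def chiper (a b ε c : ℝ) (u : ℝ) : ℝ := chi a b ε (u - (⌈u - c⌉ : ℤ))

variable {a b ε c : ℝ}

lemma chiper_periodic : Periodic (chiper a b ε c) 1 := by
  intro u
  unfold chiper
  have h : u + 1 - c = (u - c) + 1 := by ring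
  rw [h, Int.ceil_add_one]
  congr 1
  push_cast
  ring

lemma chiper_eq_chi {u : ℝ} (h1 : c - 1 < u) (h2 : u ≤ c) : chiper a b ε c u = chi a b ε u := by
  have h : ⌈u - c⌉ = 0 := by
    rw [Int.ceil_eq_zero_iff]
    exact ⟨by simpa using by linarith, by linarith⟩
  unfold chiper
  rw [h]
  norm_num

lemma contDiffAt_chiper (hε : 0 < ε) (hac : a < c) (hbc : b < c) (hca : c < a + 1) (u : ℝ) :
    ContDiffAt ℝ 2 (chiper a b ε c) u := by
  set n : ℤ := ⌈u - c⌉ with hn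
  rcases lt_or_eq_of_le (Int.le_ceil (u - c)) with hlt | heq
  · -- u - c < n : ceil locally constant
    have hub : u < c + n := by linarith
    have hlb : c + n - 1 < u := by
      have := Int.ceil_lt_add_one (u - c)
      rw [← hn] at this
      linarith
    have hev : chiper a b ε c =ᶠ[𝓝 u] fun v => chi a b ε (v - n) := by
      filter_upwards [Ioo_mem_nhds hlb hub] with v hv
      unfold chiper
      have h : ⌈v - c⌉ = n := by
        rw [Int.ceil_eq_iff]
        exact ⟨by push_cast; linarith [hv.1], by push_cast; linarith [hv.2]⟩
      rw [h]
    have hc : ContDiffAt ℝ 2 (fun v => chi a b ε (v - (n:ℝ))) u :=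
      (contDiff_chi.comp (contDiff_id.sub contDiff_const)).contDiffAt
    exact hc.congr_of_eventuallyEq hev
  · -- u = c + n : gluing point, chiper vanishes near u
    have hu : u = c + n := by linarith
    have hd1 : (0:ℝ) < c - b := by linarith
    have hd2 : (0:ℝ) < a + 1 - c := by linarith
    set d : ℝ := min (c - b) (a + 1 - c) with hdd
    have hd : 0 < d := lt_min hd1 hd2
    have hdb : d ≤ c - b := min_le_left _ _
    have hda : d ≤ a + 1 - c := min_le_right _ _
    have hd1' : d < 1 := by
      calc d ≤ a + 1 - c := hda
      _ < 1 := by linarith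
    have hev : chiper a b ε c =ᶠ[𝓝 u] fun _ => (0:ℝ) := by
      filter_upwards [Ioo_mem_nhds (show u - d < u by linarith) (show u < u + d by linarith)]
        with v hv
      rcases le_or_gt v u with hvu | hvu
      · have hceil : ⌈v - c⌉ = n := by
          rw [Int.ceil_eq_iff]
          constructor
          · push_cast
            have : u - d < v := hv.1
            rw [hu] at this
            linarith
          · push_cast
            rw [hu] at hvu
            linarith
        unfold chiper
        rw [hceil]
        apply chi_zero_right hε
        have : u - d < v := hv.1
        rw [hu] at this
        have : c - d < v - n := by push_cast at this ⊢; linarith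
        linarith
      · have hceil : ⌈v - c⌉ = n + 1 := by
          rw [Int.ceil_eq_iff]
          constructor
          · push_cast
            rw [hu] at hvu
            linarith
          · push_cast
            have : v < u + d := hv.2
            rw [hu] at this
            linarith
        unfold chiper
        rw [hceil]
        apply chi_zero_left hε
        have : v < u + d := hv.2
        rw [hu] at this
        push_cast
        linarith
    exact contDiffAt_const.congr_of_eventuallyEq hev

lemma contDiff_chiper (hε : 0 < ε) (hac : a < c) (hbc : b < c) (hca : c < a + 1) :
    ContDiff ℝ 2 (chiper a b ε c) :=
  contDiff_iff_contDiffAt.2 (contDiffAt_chiper hε hac hbc hca)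

lemma chiper_eventuallyEq_chi {u : ℝ} (hu : u ∈ Ioo (c - 1) c) :
    chiper a b ε c =ᶠ[𝓝 u] chi a b ε := by
  filter_upwards [Ioo_mem_nhds hu.1 hu.2] with v hv
  exact chiper_eq_chi hv.1 hv.2.le

lemma deriv_chiper_eq (hε : ε ≠ 0) {u : ℝ} (hu : u ∈ Ioo (c - 1) c) :
    deriv (chiper a b ε c) u = dchi a b ε u := by
  rw [(chiper_eventuallyEq_chi hu).deriv_eq]
  exact (hasDerivAt_chi hε u).deriv

lemma deriv2_chiper_eq (hε : ε ≠ 0) {u : ℝ} (hu : u ∈ Ioo (c - 1) c) :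
    deriv (deriv (chiper a b ε c)) u = ddchi a b ε u := by
  have hev : deriv (chiper a b ε c) =ᶠ[𝓝 u] dchi a b ε := by
    filter_upwards [Ioo_mem_nhds hu.1 hu.2] with v hv
    exact deriv_chiper_eq hε hv
  rw [hev.deriv_eq]
  exact (hasDerivAt_dchi hε u).deriv


lemma slice_cont {T : ℝ} {ρ : ℝ → ℝ → ℝ}
    (hcont : ContinuousOn (uncurry ρ) (Icc (0:ℝ) T ×ˢ univ)) {τ : ℝ}
    (hτ : τ ∈ Icc (0:ℝ) T) : Continuous (ρ τ) := by
  rw [← continuousOn_univ]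
  exact hcont.comp ((continuous_const.prodMk continuous_id).continuousOn)
    (fun u _ => ⟨hτ, mem_univ u⟩)

lemma cont_param {T lo hi : ℝ} (hlo : lo ≤ hi) (F : ℝ → ℝ → ℝ)
    (hF : ContinuousOn (uncurry F) (Icc (0:ℝ) T ×ˢ univ)) {s : ℝ} (hs : s ∈ Icc (0:ℝ) T) :
    ContinuousWithinAt (fun τ => ∫ u in Ioc lo hi, F τ u) (Icc (0:ℝ) T) s := by
  rw [Metric.continuousWithinAt_iff]
  intro η hη
  have hK : IsCompact (Icc (0:ℝ) T ×ˢ Icc lo hi) := isCompact_Icc.prod isCompact_Icc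
  have hFK : ContinuousOn (uncurry F) (Icc (0:ℝ) T ×ˢ Icc lo hi) :=
    hF.mono (prod_mono subset_rfl (subset_univ _))
  have hUC := hK.uniformContinuousOn_of_continuous hFK
  rw [Metric.uniformContinuousOn_iff] at hUC
  have hpos : (0:ℝ) < hi - lo + 1 := by linarith
  have hη' : 0 < η / (hi - lo + 1) := by positivity
  obtain ⟨δ, hδ, hδ'⟩ := hUC (η / (hi - lo + 1)) hη'
  refine ⟨δ, hδ, fun {τ} hτ hdist => ?_⟩
  have int1 : IntegrableOn (F τ) (Ioc lo hi) :=
    ((slice_cont hF hτ).continuousOn.integrableOn_Icc).mono_set Ioc_subset_Icc_self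
  have int2 : IntegrableOn (F s) (Ioc lo hi) :=
    ((slice_cont hF hs).continuousOn.integrableOn_Icc).mono_set Ioc_subset_Icc_self
  have key : dist (∫ u in Ioc lo hi, F τ u) (∫ u in Ioc lo hi, F s u)
      ≤ (η / (hi - lo + 1)) * (hi - lo) := by
    rw [dist_eq_norm, ← integral_sub int1 int2]
    have hb : ∀ u ∈ Ioc lo hi, ‖F τ u - F s u‖ ≤ η / (hi - lo + 1) := by
      intro u hu
      have hu' : u ∈ Icc lo hi := Ioc_subset_Icc_self hu
      have h1 : (τ, u) ∈ Icc (0:ℝ) T ×ˢ Icc lo hi := ⟨hτ, hu'⟩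
      have h2 : (s, u) ∈ Icc (0:ℝ) T ×ˢ Icc lo hi := ⟨hs, hu'⟩
      have hd : dist (τ, u) (s, u) < δ := by
        rw [Prod.dist_eq]
        simpa [dist_self] using lt_of_le_of_lt (max_le (le_refl (dist τ s)) dist_nonneg) hdist
      have := hδ' (τ, u) h1 (s, u) h2 hd
      rw [← dist_eq_norm]
      exact this.le
    have := norm_setIntegral_le_of_norm_le_const (μ := volume) (s := Ioc lo hi)
      (C := η / (hi - lo + 1)) measure_Ioc_lt_top hb
    simpa [measureReal_def, Real.volume_Ioc, ENNReal.toReal_ofReal (by linarith : (0:ℝ) ≤ hi - lo)] using this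
  calc dist (∫ u in Ioc lo hi, F τ u) (∫ u in Ioc lo hi, F s u)
      ≤ (η / (hi - lo + 1)) * (hi - lo) := key
    _ < (η / (hi - lo + 1)) * (hi - lo + 1) := by
        exact mul_lt_mul_of_pos_left (by linarith) hη'
    _ = η := by field_simp


/-- du Bois-Reymond-type argument: from the weak identity and an a.e. bound on the
flux term, deduce near-conservation on `[0,t)`. -/
lemma DBR {T t : ℝ} (ht : 0 < t) (htT : t ≤ T) (G R : ℝ → ℝ)
    (hGc : ContinuousOn G (Icc (0:ℝ) T))
    (hRc : ContinuousOn R (Icc (0:ℝ) T))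
    (δ : ℝ) (hδ : 0 ≤ δ) (hRb : ∀ τ ∈ Ioc (0:ℝ) t, |R τ| ≤ δ)
    (hkey : ∀ φ : ℝ → ℝ, ContDiff ℝ 1 φ → (∃ A, A < T ∧ ∀ τ, A ≤ τ → φ τ = 0) →
      (∫ τ in Ioc (0:ℝ) T, deriv φ τ * G τ) + φ 0 * G 0
        + (∫ τ in Ioc (0:ℝ) T, φ τ * R τ) = 0) :
    ∀ s ∈ Ico (0:ℝ) t, |G s - G 0| ≤ t * δ := by
  have hT : 0 < T := lt_of_lt_of_le ht htT
  intro s hs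
  obtain ⟨hs0, hst⟩ := hs
  refine le_of_forall_pos_le_add (fun η hη => ?_)
  set η' : ℝ := η / (B1 + 1) with hη'def
  have hB1 : (0:ℝ) < B1 + 1 := by linarith [B1_nonneg]
  have hη' : 0 < η' := by positivity
  -- continuity of G at s within Icc 0 T
  have hsT : s ∈ Icc (0:ℝ) T := ⟨hs0, le_trans hst.le htT⟩
  have hGs := hGc s hsT
  rw [Metric.continuousWithinAt_iff] at hGs
  obtain ⟨δc, hδc, hδc'⟩ := hGs η' hη'
  set h : ℝ := min (δc / 2) ((t - s) / 2) with hdef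
  have hh : 0 < h := lt_min (by linarith) (by linarith)
  have hsh : s + h < t := by
    have : h ≤ (t - s) / 2 := min_le_right _ _
    linarith
  have hshT : s + h < T := lt_of_lt_of_le hsh htT
  -- the test function
  set φ : ℝ → ℝ := fun τ => r ((s + h - τ) / h) with hφdef
  set dφ : ℝ → ℝ := fun τ => deriv r ((s + h - τ) / h) * (-1 / h) with hdφdef
  have hφc : ContDiff ℝ 1 φ :=
    (r_contDiff (n := 1)).comp ((contDiff_const.sub contDiff_id).div_const h)
  have hder : ∀ τ, HasDerivAt φ (dφ τ) τ := by
    intro τ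
    have haff : HasDerivAt (fun τ : ℝ => (s + h - τ) / h) (-1 / h) τ := by
      simpa using ((hasDerivAt_id τ).const_sub (s + h)).div_const h
    exact (r_diff.differentiableAt.hasDerivAt).comp τ haff
  have hderiv : deriv φ = dφ := funext fun τ => (hder τ).deriv
  have hφ0 : φ 0 = 1 := by
    apply r_one_of_one_le
    rw [le_div_iff₀ hh]
    linarith
  have hφ_vanish : ∀ τ, s + h ≤ τ → φ τ = 0 := by
    intro τ hτ
    apply r_zero_of_nonpos
    apply div_nonpos_iff.2 (Or.inr ⟨by linarith, hh.le⟩)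
  have hdφ_zero_left : ∀ τ, τ ≤ s → dφ τ = 0 := by
    intro τ hτ
    have : (1:ℝ) ≤ (s + h - τ) / h := by
      rw [le_div_iff₀ hh]; linarith
    simp [hdφdef, dr_zero_of_one_le this]
  have hdφ_zero_right : ∀ τ, s + h < τ → dφ τ = 0 := by
    intro τ hτ
    have : (s + h - τ) / h ≤ 0 := div_nonpos_iff.2 (Or.inr ⟨by linarith, hh.le⟩)
    simp [hdφdef, dr_zero_of_nonpos this]
  have hdφ_cont : Continuous dφ :=
    (dr_cont.comp ((continuous_const.sub continuous_id).div_const h)).mul continuous_const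
  have hdφ_bound : ∀ τ, |dφ τ| ≤ B1 * (1 / h) := by
    intro τ
    rw [hdφdef]
    simp only []
    rw [abs_mul]
    have h1 : |(-1 : ℝ) / h| = 1 / h := by
      rw [abs_div]
      simp [abs_of_pos hh]
    rw [h1]
    exact mul_le_mul_of_nonneg_right (abs_dr_le _) (by positivity)
  -- apply the key identity
  have hid := hkey φ hφc ⟨s + h, hshT, hφ_vanish⟩
  rw [hderiv, hφ0, one_mul] at hid
  -- first term: localize
  have hGint : IntegrableOn G (Icc (0:ℝ) T) := hGc.integrableOn_Icc
  have hsub1 : Ioc s (s + h) ⊆ Ioc (0:ℝ) T := fun τ hτ =>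
    ⟨lt_of_le_of_lt hs0 hτ.1, le_trans hτ.2 hshT.le⟩
  have e1 : (∫ τ in Ioc (0:ℝ) T, dφ τ * G τ) = ∫ τ in Ioc s (s + h), dφ τ * G τ := by
    apply setIntegral_eq_of_subset_of_forall_diff_eq_zero measurableSet_Ioc hsub1
    intro τ hτ
    rcases le_or_gt τ s with h' | h'
    · rw [hdφ_zero_left τ h', zero_mul]
    · have : s + h < τ := by
        by_contra hcon
        exact hτ.2 ⟨h', not_lt.1 hcon⟩
      rw [hdφ_zero_right τ this, zero_mul]
  -- FTC: integral of dφ over [s, s+h] is -1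
  have eFTC : (∫ τ in Ioc s (s + h), dφ τ) = -1 := by
    have : (∫ τ in s..(s+h), dφ τ) = φ (s + h) - φ s := by
      apply intervalIntegral.integral_eq_sub_of_hasDerivAt
      · intro τ _
        exact hder τ
      · exact hdφ_cont.intervalIntegrable _ _
    rw [intervalIntegral.integral_of_le (by linarith)] at this
    rw [this, hφ_vanish (s + h) le_rfl]
    have : φ s = 1 := r_one_of_one_le (by rw [le_div_iff₀ hh]; linarith)
    rw [this]
    ring
  -- integrability on Ioc s (s+h)
  have hGc' : ContinuousOn G (Icc s (s + h)) :=
    hGc.mono (fun τ hτ => ⟨le_trans hs0 hτ.1, le_trans hτ.2 hshT.le⟩)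
  have hint1 : IntegrableOn (fun τ => dφ τ * G τ) (Ioc s (s + h)) :=
    ((hdφ_cont.continuousOn.mul hGc').integrableOn_Icc).mono_set Ioc_subset_Icc_self
  have hint2 : IntegrableOn dφ (Ioc s (s + h)) :=
    (hdφ_cont.continuousOn.integrableOn_Icc).mono_set Ioc_subset_Icc_self
  -- |G τ - G s| ≤ η' on the window
  have hGwin : ∀ τ ∈ Ioc s (s + h), |G τ - G s| ≤ η' := by
    intro τ hτ
    have hτT : τ ∈ Icc (0:ℝ) T := hsub1 hτ |>.imp (fun h' => h'.le) id
    have hd : dist τ s < δc := by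
      rw [Real.dist_eq, abs_of_nonneg (by linarith [hτ.1.le] : (0:ℝ) ≤ τ - s)]
      have : h ≤ δc / 2 := min_le_left _ _
      linarith [hτ.2]
    have := hδc' hτT hd
    rw [Real.dist_eq] at this
    exact this.le
  -- main estimate on the first term
  have e2 : (∫ τ in Ioc s (s + h), dφ τ * G τ)
      = (∫ τ in Ioc s (s + h), dφ τ * (G τ - G s)) + G s * (∫ τ in Ioc s (s + h), dφ τ) := by
    have hint3 : IntegrableOn (fun τ => dφ τ * (G τ - G s)) (Ioc s (s + h)) := by
      apply Integrable.congr (hint1.sub (hint2.mul_const (G s)))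
      exact Eventually.of_forall (fun τ => by simp [Pi.sub_apply]; ring)
    rw [← integral_const_mul]
    rw [← integral_add hint3 (hint2.const_mul _)]
    congr 1
    funext τ
    ring
  have e3 : |∫ τ in Ioc s (s + h), dφ τ * (G τ - G s)| ≤ η := by
    have hb : ∀ τ ∈ Ioc s (s + h), ‖dφ τ * (G τ - G s)‖ ≤ (B1 * (1 / h)) * η' := by
      intro τ hτ
      rw [Real.norm_eq_abs, abs_mul]
      exact mul_le_mul (hdφ_bound τ) (hGwin τ hτ) (abs_nonneg _)
        (mul_nonneg B1_nonneg (by positivity))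
    have hint3 : IntegrableOn (fun τ => dφ τ * (G τ - G s)) (Ioc s (s + h)) := by
      apply Integrable.congr (hint1.sub (hint2.mul_const (G s)))
      exact Eventually.of_forall (fun τ => by simp [Pi.sub_apply]; ring)
    have := norm_setIntegral_le_of_norm_le_const (μ := volume) (s := Ioc s (s + h))
      measure_Ioc_lt_top hb
    rw [Real.norm_eq_abs] at this
    calc |∫ τ in Ioc s (s + h), dφ τ * (G τ - G s)|
        ≤ (B1 * (1 / h) * η') * (volume (Ioc s (s + h))).toReal := this
      _ = B1 * (1 / h) * η' * h := by
          rw [Real.volume_Ioc, ENNReal.toReal_ofReal (by linarith : (0:ℝ) ≤ s + h - s)]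
          ring_nf
      _ = B1 * η' := by field_simp
      _ ≤ (B1 + 1) * η' := by nlinarith
      _ = η := by rw [hη'def]; field_simp
  -- third term: localize and bound
  have hsub3 : Ioc (0:ℝ) (s + h) ⊆ Ioc (0:ℝ) T := Ioc_subset_Ioc le_rfl hshT.le
  have e4 : (∫ τ in Ioc (0:ℝ) T, φ τ * R τ) = ∫ τ in Ioc (0:ℝ) (s + h), φ τ * R τ := by
    apply setIntegral_eq_of_subset_of_forall_diff_eq_zero measurableSet_Ioc hsub3
    intro τ hτ
    have : s + h < τ := by
      by_contra hcon
      exact hτ.2 ⟨hτ.1.1, not_lt.1 hcon⟩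
    rw [hφ_vanish τ this.le, zero_mul]
  have hφcont : Continuous φ := hφc.continuous
  have hRint : IntegrableOn (fun τ => φ τ * R τ) (Ioc (0:ℝ) (s + h)) := by
    have : ContinuousOn (fun τ => φ τ * R τ) (Icc (0:ℝ) (s + h)) :=
      hφcont.continuousOn.mul (hRc.mono (Icc_subset_Icc le_rfl hshT.le))
    exact this.integrableOn_Icc.mono_set Ioc_subset_Icc_self
  have e5 : |∫ τ in Ioc (0:ℝ) (s + h), φ τ * R τ| ≤ t * δ := by
    have hb : ∀ τ ∈ Ioc (0:ℝ) (s + h), ‖φ τ * R τ‖ ≤ δ := by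
      intro τ hτ
      rw [Real.norm_eq_abs, abs_mul]
      have h1 : |φ τ| ≤ 1 := abs_r_le _
      have h2 : |R τ| ≤ δ := hRb τ ⟨hτ.1, le_trans hτ.2 hsh.le⟩
      calc |φ τ| * |R τ| ≤ 1 * δ := mul_le_mul h1 h2 (abs_nonneg _) zero_le_one
        _ = δ := one_mul _
    have := norm_setIntegral_le_of_norm_le_const (μ := volume) (s := Ioc (0:ℝ) (s + h))
      measure_Ioc_lt_top hb
    rw [Real.norm_eq_abs] at this
    calc |∫ τ in Ioc (0:ℝ) (s + h), φ τ * R τ|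
        ≤ δ * (volume (Ioc (0:ℝ) (s + h))).toReal := this
      _ = δ * (s + h) := by
          rw [Real.volume_Ioc, ENNReal.toReal_ofReal (by linarith : (0:ℝ) ≤ s + h - 0)]
          ring_nf
      _ ≤ δ * t := mul_le_mul_of_nonneg_left hsh.le hδ
      _ = t * δ := mul_comm _ _
  -- put everything together
  rw [e1, e2, eFTC, e4] at hid
  have : G s - G 0 = (∫ τ in Ioc s (s + h), dφ τ * (G τ - G s))
      + (∫ τ in Ioc (0:ℝ) (s + h), φ τ * R τ) := by linarith
  rw [this]
  calc |(∫ τ in Ioc s (s + h), dφ τ * (G τ - G s))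
      + (∫ τ in Ioc (0:ℝ) (s + h), φ τ * R τ)|
      ≤ |∫ τ in Ioc s (s + h), dφ τ * (G τ - G s)|
        + |∫ τ in Ioc (0:ℝ) (s + h), φ τ * R τ| := abs_add_le _ _
    _ ≤ η + t * δ := add_le_add e3 e5
    _ = t * δ + η := by ring


lemma ENGINE {m : ℕ} {T : ℝ} {ρ w : ℝ → ℝ → ℝ}
    (hId1 : ∀ ξ : ℝ → ℝ → ℝ, ContDiff ℝ 1 (uncurry ξ) → (∀ t, Periodic (ξ t) 1) →
      (∃ A : ℝ, A < T ∧ ∀ t, A ≤ t → ∀ u, ξ t u = 0) →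
      (∫ t in Ioc (0:ℝ) T, ∫ u in Ioc (0:ℝ) 1, (ρ t u)^m * deriv (ξ t) u)
        = - ∫ t in Ioc (0:ℝ) T, ∫ u in Ioc (0:ℝ) 1, w t u * ξ t u)
    (hId2 : ∀ ξ : ℝ → ℝ → ℝ, ContDiff ℝ 1 (uncurry ξ) → (∀ t, Periodic (ξ t) 1) →
      (∃ A : ℝ, A < T ∧ ∀ t, A ≤ t → ∀ u, ξ t u = 0) →
      (∫ t in Ioc (0:ℝ) T, ∫ u in Ioc (0:ℝ) 1, ρ t u * deriv (fun s => ξ s u) t)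
        + (∫ u in Ioc (0:ℝ) 1, ρ 0 u * ξ 0 u)
        - (∫ t in Ioc (0:ℝ) T, ∫ u in Ioc (0:ℝ) 1, w t u * deriv (ξ t) u) = 0)
    (χ : ℝ → ℝ) (hχ : ContDiff ℝ 2 χ) (hχper : Periodic χ 1)
    (φ : ℝ → ℝ) (hφ : ContDiff ℝ 1 φ) (hvan : ∃ A, A < T ∧ ∀ τ, A ≤ τ → φ τ = 0) :
    (∫ τ in Ioc (0:ℝ) T, deriv φ τ * (∫ u in Ioc (0:ℝ) 1, ρ τ u * χ u))
      + φ 0 * (∫ u in Ioc (0:ℝ) 1, ρ 0 u * χ u)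
      + (∫ τ in Ioc (0:ℝ) T, φ τ * (∫ u in Ioc (0:ℝ) 1, (ρ τ u)^m * deriv (deriv χ) u)) = 0 := by
  obtain ⟨A, hAT, hA⟩ := hvan
  have hφd : Differentiable ℝ φ := hφ.differentiable (by simp)
  have hχ1 : ContDiff ℝ 1 χ := hχ.of_le (by norm_num)
  have hχd : Differentiable ℝ χ := hχ1.differentiable (by simp)
  have hdχ : ContDiff ℝ 1 (deriv χ) :=
    ((contDiff_succ_iff_deriv (n := 1)).1 (hχ : ContDiff ℝ (1+1) χ)).2.2
  have hdχd : Differentiable ℝ (deriv χ) := hdχ.differentiable (by simp)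
  -- first test function ξ = φ ⊗ χ
  have hξc : ContDiff ℝ 1 (uncurry (fun τ u => φ τ * χ u)) :=
    (hφ.comp contDiff_fst).mul (hχ1.comp contDiff_snd)
  have hξper : ∀ τ, Periodic ((fun τ u => φ τ * χ u) τ) 1 := by
    intro τ u
    simp [hχper u]
  have hξvan : ∃ A' : ℝ, A' < T ∧ ∀ τ, A' ≤ τ → ∀ u, (fun τ u => φ τ * χ u) τ u = 0 := by
    exact ⟨A, hAT, fun τ hτ u => by simp [hA τ hτ]⟩
  have E2 := hId2 (fun τ u => φ τ * χ u) hξc hξper hξvan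
  -- second test function ξ₂ = φ ⊗ χ'
  have hξ2c : ContDiff ℝ 1 (uncurry (fun τ u => φ τ * deriv χ u)) :=
    (hφ.comp contDiff_fst).mul (hdχ.comp contDiff_snd)
  have hξ2per : ∀ τ, Periodic ((fun τ u => φ τ * deriv χ u) τ) 1 := by
    intro τ u
    simp [periodic_deriv χ hχper u]
  have hξ2van : ∃ A' : ℝ, A' < T ∧ ∀ τ, A' ≤ τ → ∀ u, (fun τ u => φ τ * deriv χ u) τ u = 0 := by
    exact ⟨A, hAT, fun τ hτ u => by simp [hA τ hτ]⟩
  have E1 := hId1 (fun τ u => φ τ * deriv χ u) hξ2c hξ2per hξ2van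
  -- rewrite time derivative
  have h1 : ∀ τ : ℝ, (∫ u in Ioc (0:ℝ) 1, ρ τ u * deriv (fun s => φ s * χ u) τ)
      = deriv φ τ * ∫ u in Ioc (0:ℝ) 1, ρ τ u * χ u := by
    intro τ
    rw [← integral_const_mul]
    apply integral_congr_ae
    apply Eventually.of_forall
    intro u
    beta_reduce
    rw [deriv_mul_const (hφd τ)]
    ring
  -- rewrite space derivative of ξ
  have h2 : ∀ τ : ℝ, (∫ u in Ioc (0:ℝ) 1, w τ u * deriv (fun u => φ τ * χ u) u)
      = φ τ * ∫ u in Ioc (0:ℝ) 1, w τ u * deriv χ u := by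
    intro τ
    rw [← integral_const_mul]
    apply integral_congr_ae
    apply Eventually.of_forall
    intro u
    beta_reduce
    rw [deriv_const_mul _ (hχd u)]
    ring
  -- rewrite initial term
  have h3 : (∫ u in Ioc (0:ℝ) 1, ρ 0 u * (φ 0 * χ u))
      = φ 0 * ∫ u in Ioc (0:ℝ) 1, ρ 0 u * χ u := by
    rw [← integral_const_mul]
    apply integral_congr_ae
    apply Eventually.of_forall
    intro u
    beta_reduce
    ring
  -- rewrite space derivative of ξ₂
  have h4 : ∀ τ : ℝ, (∫ u in Ioc (0:ℝ) 1, (ρ τ u)^m * deriv (fun u => φ τ * deriv χ u) u)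
      = φ τ * ∫ u in Ioc (0:ℝ) 1, (ρ τ u)^m * deriv (deriv χ) u := by
    intro τ
    rw [← integral_const_mul]
    apply integral_congr_ae
    apply Eventually.of_forall
    intro u
    beta_reduce
    rw [deriv_const_mul _ (hdχd u)]
    ring
  have h5 : ∀ τ : ℝ, (∫ u in Ioc (0:ℝ) 1, w τ u * (φ τ * deriv χ u))
      = φ τ * ∫ u in Ioc (0:ℝ) 1, w τ u * deriv χ u := by
    intro τ
    rw [← integral_const_mul]
    apply integral_congr_ae
    apply Eventually.of_forall
    intro u
    beta_reduce
    ring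
  simp only [h1, h2, h3] at E2
  simp only [h4, h5] at E1
  linarith [E1, E2]


lemma ddchi_cont {a b ε : ℝ} : Continuous (ddchi a b ε) := by
  have cl1 : Continuous (l1 a ε) := (continuous_id.sub continuous_const).div_const ε
  have cl2 : Continuous (l2 b ε) := (continuous_const.sub continuous_id).div_const ε
  unfold ddchi
  exact ((((ddr_cont.comp cl1).mul (r_cont.comp cl2)).sub
    (((continuous_const.mul (dr_cont.comp cl1))).mul (dr_cont.comp cl2))).add
    ((r_cont.comp cl1).mul (ddr_cont.comp cl2))).div_const _

/-- pressure Lipschitz bound -/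
lemma pressure_bound {m : ℕ} (hm : 2 ≤ m) {T : ℝ} {K : NNReal} {ρ : ℝ → ℝ → ℝ}
    (hrange : ∀ t u, ρ t u ∈ Icc (0:ℝ) 1)
    (hLip : LipschitzOnWith K
      (uncurry (fun t u => (m / (m - 1) : ℝ) * ρ t u ^ (m - 1))) (Icc (0:ℝ) T ×ˢ univ))
    {τ x y : ℝ} (hτ : τ ∈ Icc (0:ℝ) T) (hzero : ρ τ y = 0) :
    ρ τ x ^ (m - 1) ≤ K * |x - y| := by
  have hd := hLip.dist_le_mul (τ, x) ⟨hτ, mem_univ _⟩ (τ, y) ⟨hτ, mem_univ _⟩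
  have hm0 : m - 1 ≠ 0 := by omega
  have h2m : (2:ℝ) ≤ (m:ℝ) := by exact_mod_cast hm
  have hys : (m / (m - 1) : ℝ) * ρ τ y ^ (m - 1) = 0 := by
    rw [hzero, zero_pow hm0, mul_zero]
  have hdist : dist ((τ, x) : ℝ × ℝ) (τ, y) = |x - y| := by
    rw [Prod.dist_eq]
    simp [Real.dist_eq]
  have heval : dist (uncurry (fun t u => (m / (m - 1) : ℝ) * ρ t u ^ (m - 1)) (τ, x))
      (uncurry (fun t u => (m / (m - 1) : ℝ) * ρ t u ^ (m - 1)) (τ, y))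
      = (m / (m - 1) : ℝ) * ρ τ x ^ (m - 1) := by
    show dist ((m / (m - 1) : ℝ) * ρ τ x ^ (m - 1)) ((m / (m - 1) : ℝ) * ρ τ y ^ (m - 1)) = _
    rw [hys, dist_zero_right, Real.norm_eq_abs, abs_of_nonneg]
    have h0 : (0:ℝ) ≤ ρ τ x := (hrange τ x).1
    have h1 : (0:ℝ) < (m:ℝ) - 1 := by linarith
    positivity
  rw [heval, hdist] at hd
  have hfac : (1:ℝ) ≤ (m / (m - 1) : ℝ) := by
    rw [le_div_iff₀ (by linarith)]
    linarith
  have h0 : (0:ℝ) ≤ ρ τ x ^ (m - 1) := pow_nonneg (hrange τ x).1 _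
  nlinarith

lemma flux_bound {m : ℕ} (hm : 2 ≤ m) {T t : ℝ} {K : NNReal} {ρ : ℝ → ℝ → ℝ}
    (ht : 0 < t) (htT : t ≤ T)
    (hper : ∀ τ, Periodic (ρ τ) 1)
    (hrange : ∀ τ u, ρ τ u ∈ Icc (0:ℝ) 1)
    (hcont : ContinuousOn (uncurry ρ) (Icc (0:ℝ) T ×ˢ univ))
    (hLip : LipschitzOnWith K
      (uncurry (fun t u => (m / (m - 1) : ℝ) * ρ t u ^ (m - 1))) (Icc (0:ℝ) T ×ˢ univ))
    {a b ε c : ℝ} (hab : a < b) (hε : 0 < ε) (hε2 : 2 * ε < b - a)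
    (hac : a < c) (hbc : b < c) (hca : c < a + 1)
    (hza : ∀ τ ∈ Icc (0:ℝ) t, ρ τ a = 0) (hzb : ∀ τ ∈ Icc (0:ℝ) t, ρ τ b = 0)
    {ρb : ℝ} (hρb : 0 ≤ ρb)
    (hsmall : ∀ τ ∈ Icc (0:ℝ) t, ∀ u, (|u - a| ≤ ε ∨ |u - b| ≤ ε) → ρ τ u ≤ ρb) :
    ∀ τ ∈ Ioc (0:ℝ) t,
      |∫ u in Ioc (0:ℝ) 1, ρ τ u ^ m * deriv (deriv (chiper a b ε c)) u|
        ≤ 2 * (K * (2 * B2 + 2 * B1 ^ 2)) * ρb := by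
  intro τ hτ
  have hτT : τ ∈ Icc (0:ℝ) T := ⟨hτ.1.le, hτ.2.trans htT⟩
  have hτt : τ ∈ Icc (0:ℝ) t := ⟨hτ.1.le, hτ.2⟩
  have hρcont : Continuous (ρ τ) := slice_cont hcont hτT
  set M : ℝ := 2 * B2 + 2 * B1 ^ 2 with hM
  have hM0 : 0 ≤ M := by
    have := B1_nonneg
    have := B2_nonneg
    positivity
  set f : ℝ → ℝ := fun u => ρ τ u ^ m * deriv (deriv (chiper a b ε c)) u with hf
  set g : ℝ → ℝ := fun u => ρ τ u ^ m * ddchi a b ε u with hg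
  -- f is 1-periodic
  have hfper : Periodic f 1 := by
    intro u
    unfold f
    beta_reduce
    rw [hper τ u, periodic_deriv _ (periodic_deriv _ chiper_periodic) u]
  -- shift the integration interval
  have hshift : (∫ u in Ioc (0:ℝ) 1, f u) = ∫ u in Ioc (c-1) c, f u := by
    have h0 := hfper.intervalIntegral_add_eq 0 (c - 1)
    rw [zero_add] at h0
    have h1 : c - 1 + 1 = c := by ring
    rw [h1] at h0
    rw [← intervalIntegral.integral_of_le (by norm_num : (0:ℝ) ≤ 1),
      ← intervalIntegral.integral_of_le (by linarith : c - 1 ≤ c), h0]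
  -- replace by the explicit second derivative
  have hrepl : (∫ u in Ioc (c-1) c, f u) = ∫ u in Ioc (c-1) c, g u := by
    rw [integral_Ioc_eq_integral_Ioo, integral_Ioc_eq_integral_Ioo]
    apply setIntegral_congr_fun measurableSet_Ioo
    intro u hu
    unfold f g
    beta_reduce
    rw [deriv2_chiper_eq hε.ne' hu]
  -- integrability
  have hgcont : Continuous g := (hρcont.pow m).mul ddchi_cont
  have hint : ∀ x y : ℝ, IntervalIntegrable g volume x y :=
    fun x y => hgcont.intervalIntegrable x y
  -- split into five pieces
  have s1 : (∫ u in (c-1)..c, g u) = (∫ u in (c-1)..a, g u) + (∫ u in a..c, g u) :=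
    (intervalIntegral.integral_add_adjacent_intervals (hint (c-1) a) (hint a c)).symm
  have s2 : (∫ u in a..c, g u) = (∫ u in a..(a+ε), g u) + (∫ u in (a+ε)..c, g u) :=
    (intervalIntegral.integral_add_adjacent_intervals (hint a (a+ε)) (hint (a+ε) c)).symm
  have s3 : (∫ u in (a+ε)..c, g u)
      = (∫ u in (a+ε)..(b-ε), g u) + (∫ u in (b-ε)..c, g u) :=
    (intervalIntegral.integral_add_adjacent_intervals (hint (a+ε) (b-ε)) (hint (b-ε) c)).symm
  have s4 : (∫ u in (b-ε)..c, g u) = (∫ u in (b-ε)..b, g u) + (∫ u in b..c, g u) :=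
    (intervalIntegral.integral_add_adjacent_intervals (hint (b-ε) b) (hint b c)).symm
  -- zero pieces
  have z1 : (∫ u in (c-1)..a, g u) = 0 := by
    rw [intervalIntegral.integral_congr (g := fun _ => (0:ℝ))]
    · simp
    · intro u hu
      rw [uIcc_of_le (by linarith : c - 1 ≤ a)] at hu
      unfold g
      beta_reduce
      rw [ddchi_zero_left hε hu.2, mul_zero]
  have z3 : (∫ u in (a+ε)..(b-ε), g u) = 0 := by
    rw [intervalIntegral.integral_congr (g := fun _ => (0:ℝ))]
    · simp
    · intro u hu
      rw [uIcc_of_le (by linarith : a + ε ≤ b - ε)] at hu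
      unfold g
      beta_reduce
      rw [ddchi_zero_mid hε hu.1 hu.2, mul_zero]
  have z5 : (∫ u in b..c, g u) = 0 := by
    rw [intervalIntegral.integral_congr (g := fun _ => (0:ℝ))]
    · simp
    · intro u hu
      rw [uIcc_of_le (by linarith : b ≤ c)] at hu
      unfold g
      beta_reduce
      rw [ddchi_zero_right hε hu.1, mul_zero]
  -- ramp piece bound
  have ramp : ∀ x₁ x₂ : ℝ, x₁ ≤ x₂ → x₂ - x₁ ≤ ε →
      (∀ u ∈ Ioc x₁ x₂, ρ τ u ^ (m - 1) ≤ K * ε) → (∀ u ∈ Ioc x₁ x₂, ρ τ u ≤ ρb) →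
      |∫ u in x₁..x₂, g u| ≤ K * M * ρb := by
    intro x₁ x₂ hx hlen hpress hsm
    rw [intervalIntegral.integral_of_le hx]
    have hbd : ∀ u ∈ Ioc x₁ x₂, ‖g u‖ ≤ (K * ε * ρb) * (M / ε ^ 2) := by
      intro u hu
      have h0 : (0:ℝ) ≤ ρ τ u := (hrange τ u).1
      have hmm : ρ τ u ^ m = ρ τ u ^ (m - 1) * ρ τ u := by
        rw [← pow_succ]
        congr 1
        omega
      have hKe : (0:ℝ) ≤ (K:ℝ) * ε := mul_nonneg K.coe_nonneg hε.le
      have hpm : ρ τ u ^ m ≤ (K * ε) * ρb := by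
        rw [hmm]
        exact mul_le_mul (hpress u hu) (hsm u hu) h0 hKe
      rw [Real.norm_eq_abs]
      unfold g
      beta_reduce
      rw [abs_mul, abs_of_nonneg (pow_nonneg h0 m)]
      have hM2 : (0:ℝ) ≤ M / ε ^ 2 := by positivity
      exact mul_le_mul hpm (abs_ddchi_le hε u) (abs_nonneg _) (mul_nonneg hKe hρb)
    have hB := norm_setIntegral_le_of_norm_le_const (μ := volume) (s := Ioc x₁ x₂)
      measure_Ioc_lt_top hbd
    rw [Real.norm_eq_abs] at hB
    calc |∫ u in Ioc x₁ x₂, g u|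
        ≤ (K * ε * ρb) * (M / ε ^ 2) * (volume (Ioc x₁ x₂)).toReal := hB
      _ = (K * ε * ρb) * (M / ε ^ 2) * (x₂ - x₁) := by
          rw [Real.volume_Ioc, ENNReal.toReal_ofReal (by linarith : (0:ℝ) ≤ x₂ - x₁)]
      _ ≤ (K * ε * ρb) * (M / ε ^ 2) * ε := by
          apply mul_le_mul_of_nonneg_left hlen
          have hKe : (0:ℝ) ≤ (K:ℝ) * ε := mul_nonneg K.coe_nonneg hε.le
          positivity
      _ = K * M * ρb := by
          field_simp
  -- the two ramps
  have r2 : |∫ u in a..(a+ε), g u| ≤ K * M * ρb := by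
    apply ramp a (a+ε) (by linarith) (by linarith)
    · intro u hu
      calc ρ τ u ^ (m - 1) ≤ K * |u - a| := pressure_bound hm hrange hLip hτT (hza τ hτt)
        _ ≤ K * ε := by
          apply mul_le_mul_of_nonneg_left _ K.coe_nonneg
          rw [abs_of_nonneg (by linarith [hu.1] : (0:ℝ) ≤ u - a)]
          linarith [hu.2]
    · intro u hu
      apply hsmall τ hτt u
      left
      rw [abs_of_nonneg (by linarith [hu.1] : (0:ℝ) ≤ u - a)]
      linarith [hu.2]
  have r4 : |∫ u in (b-ε)..b, g u| ≤ K * M * ρb := by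
    apply ramp (b-ε) b (by linarith) (by linarith)
    · intro u hu
      calc ρ τ u ^ (m - 1) ≤ K * |u - b| := pressure_bound hm hrange hLip hτT (hzb τ hτt)
        _ ≤ K * ε := by
          apply mul_le_mul_of_nonneg_left _ K.coe_nonneg
          rw [abs_of_nonpos (by linarith [hu.2] : u - b ≤ (0:ℝ))]
          linarith [hu.1]
    · intro u hu
      apply hsmall τ hτt u
      right
      rw [abs_of_nonpos (by linarith [hu.2] : u - b ≤ (0:ℝ))]
      linarith [hu.1]
  -- assemble
  have hIoc : (∫ u in Ioc (c-1) c, g u) = ∫ u in (c-1)..c, g u :=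
    (intervalIntegral.integral_of_le (by linarith : c - 1 ≤ c)).symm
  rw [hshift, hrepl, hIoc, s1, s2, s3, s4, z1, z3, z5]
  calc |0 + ((∫ u in a..(a+ε), g u) + (0 + ((∫ u in (b-ε)..b, g u) + 0)))|
      = |(∫ u in a..(a+ε), g u) + (∫ u in (b-ε)..b, g u)| := by ring_nf
    _ ≤ |∫ u in a..(a+ε), g u| + |∫ u in (b-ε)..b, g u| := abs_add_le _ _
    _ ≤ K * M * ρb + K * M * ρb := add_le_add r2 r4
    _ = 2 * (K * M) * ρb := by ring


lemma periodic_shift {f : ℝ → ℝ} (hf : Periodic f 1) (c : ℝ) :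
    (∫ u in Ioc (0:ℝ) 1, f u) = ∫ u in Ioc (c-1) c, f u := by
  have h0 := hf.intervalIntegral_add_eq 0 (c - 1)
  rw [zero_add] at h0
  have h1 : c - 1 + 1 = c := by ring
  rw [h1] at h0
  rw [← intervalIntegral.integral_of_le (by norm_num : (0:ℝ) ≤ 1),
    ← intervalIntegral.integral_of_le (by linarith : c - 1 ≤ c), h0]

lemma G_compare {T : ℝ} {ρ : ℝ → ℝ → ℝ}
    (hper : ∀ τ, Periodic (ρ τ) 1)
    (hrange : ∀ τ u, ρ τ u ∈ Icc (0:ℝ) 1)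
    (hcont : ContinuousOn (uncurry ρ) (Icc (0:ℝ) T ×ˢ univ))
    {a b ε c : ℝ} (hab : a < b) (hε : 0 < ε) (hε2 : 2 * ε < b - a)
    (hac : a < c) (hbc : b < c) (hca : c < a + 1)
    {τ : ℝ} (hτ : τ ∈ Icc (0:ℝ) T) :
    |(∫ u in Ioc (0:ℝ) 1, ρ τ u * chiper a b ε c u) - ∫ u in Ioc a b, ρ τ u| ≤ 2 * ε := by
  have hρc : Continuous (ρ τ) := slice_cont hcont hτ
  have hchiperc : Continuous (chiper a b ε c) := (contDiff_chiper hε hac hbc hca).continuous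
  set F : ℝ → ℝ := fun u => ρ τ u * chiper a b ε c u with hF
  have hFper : Periodic F 1 := by
    intro u
    unfold F
    beta_reduce
    rw [hper τ u, chiper_periodic u]
  have hFc : Continuous F := hρc.mul hchiperc
  set g : ℝ → ℝ := fun u => ρ τ u * chi a b ε u with hg
  have hgc : Continuous g := hρc.mul chi_cont
  have hint : ∀ x y : ℝ, IntervalIntegrable g volume x y := fun x y => hgc.intervalIntegrable x y
  -- move to the fundamental domain around (a,b)
  have e1 : (∫ u in Ioc (0:ℝ) 1, F u) = ∫ u in Ioc (c-1) c, g u := by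
    rw [periodic_shift hFper c]
    apply setIntegral_congr_fun measurableSet_Ioc
    intro u hu
    unfold F g
    beta_reduce
    rw [chiper_eq_chi hu.1 hu.2]
  -- split
  have s1 : (∫ u in (c-1)..c, g u) = (∫ u in (c-1)..a, g u) + (∫ u in a..b, g u)
      + (∫ u in b..c, g u) := by
    rw [add_assoc, intervalIntegral.integral_add_adjacent_intervals (hint a b) (hint b c),
      intervalIntegral.integral_add_adjacent_intervals (hint (c-1) a) (hint a c)]
  have z1 : (∫ u in (c-1)..a, g u) = 0 := by
    rw [intervalIntegral.integral_congr (g := fun _ => (0:ℝ))]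
    · simp
    · intro u hu
      rw [uIcc_of_le (by linarith : c - 1 ≤ a)] at hu
      unfold g
      beta_reduce
      rw [chi_zero_left hε hu.2, mul_zero]
  have z3 : (∫ u in b..c, g u) = 0 := by
    rw [intervalIntegral.integral_congr (g := fun _ => (0:ℝ))]
    · simp
    · intro u hu
      rw [uIcc_of_le (by linarith : b ≤ c)] at hu
      unfold g
      beta_reduce
      rw [chi_zero_right hε hu.1, mul_zero]
  have e2 : (∫ u in Ioc (0:ℝ) 1, F u) = ∫ u in Ioc a b, g u := by
    rw [e1, ← intervalIntegral.integral_of_le (by linarith : c - 1 ≤ c), s1, z1, z3,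
      intervalIntegral.integral_of_le hab.le]
    ring
  -- now compare with the plain integral
  have hρint : IntegrableOn (ρ τ) (Ioc a b) :=
    (hρc.continuousOn.integrableOn_Icc).mono_set Ioc_subset_Icc_self
  have hgint : IntegrableOn g (Ioc a b) :=
    (hgc.continuousOn.integrableOn_Icc).mono_set Ioc_subset_Icc_self
  have e3 : (∫ u in Ioc a b, g u) - (∫ u in Ioc a b, ρ τ u)
      = ∫ u in Ioc a b, ρ τ u * (chi a b ε u - 1) := by
    rw [← integral_sub hgint hρint]
    apply integral_congr_ae
    apply Eventually.of_forall
    intro u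
    unfold g
    beta_reduce
    ring
  -- split the error into the two ramps
  set h : ℝ → ℝ := fun u => ρ τ u * (chi a b ε u - 1) with hh
  have hhc : Continuous h := hρc.mul (chi_cont.sub continuous_const)
  have hhint : ∀ x y : ℝ, IntervalIntegrable h volume x y := fun x y => hhc.intervalIntegrable x y
  have s2 : (∫ u in a..b, h u) = (∫ u in a..(a+ε), h u) + (∫ u in (a+ε)..(b-ε), h u)
      + (∫ u in (b-ε)..b, h u) := by
    rw [add_assoc, intervalIntegral.integral_add_adjacent_intervals (hhint (a+ε) (b-ε)) (hhint (b-ε) b),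
      intervalIntegral.integral_add_adjacent_intervals (hhint a (a+ε)) (hhint (a+ε) b)]
  have z2 : (∫ u in (a+ε)..(b-ε), h u) = 0 := by
    rw [intervalIntegral.integral_congr (g := fun _ => (0:ℝ))]
    · simp
    · intro u hu
      rw [uIcc_of_le (by linarith : a + ε ≤ b - ε)] at hu
      unfold h
      beta_reduce
      rw [chi_one hε hu.1 hu.2]
      ring
  have hbd : ∀ u : ℝ, ‖h u‖ ≤ 1 := by
    intro u
    rw [Real.norm_eq_abs]
    unfold h
    beta_reduce
    rw [abs_mul]
    have h1 : |ρ τ u| ≤ 1 := abs_le.2 ⟨by linarith [(hrange τ u).1], (hrange τ u).2⟩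
    have h2 : |chi a b ε u - 1| ≤ 1 :=
      abs_le.2 ⟨by linarith [chi_nonneg (a := a) (b := b) (ε := ε) u], by
        linarith [chi_le_one (a := a) (b := b) (ε := ε) u]⟩
    calc |ρ τ u| * |chi a b ε u - 1| ≤ 1 * 1 :=
      mul_le_mul h1 h2 (abs_nonneg _) zero_le_one
    _ = 1 := one_mul _
  have ramp : ∀ x₁ x₂ : ℝ, x₁ ≤ x₂ → x₂ - x₁ ≤ ε → |∫ u in x₁..x₂, h u| ≤ ε := by
    intro x₁ x₂ hx hlen
    rw [intervalIntegral.integral_of_le hx]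
    have hB := norm_setIntegral_le_of_norm_le_const (μ := volume) (s := Ioc x₁ x₂)
      measure_Ioc_lt_top (fun u _ => hbd u)
    rw [Real.norm_eq_abs] at hB
    calc |∫ u in Ioc x₁ x₂, h u| ≤ 1 * (volume (Ioc x₁ x₂)).toReal := hB
      _ = x₂ - x₁ := by
          rw [Real.volume_Ioc, ENNReal.toReal_ofReal (by linarith : (0:ℝ) ≤ x₂ - x₁)]
          ring
      _ ≤ ε := hlen
  have e4 : (∫ u in Ioc a b, h u) = (∫ u in a..(a+ε), h u) + (∫ u in (b-ε)..b, h u) := by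
    rw [← intervalIntegral.integral_of_le hab.le, s2, z2]
    ring
  rw [e2, e3]
  show |∫ u in Ioc a b, h u| ≤ 2 * ε
  rw [e4]
  calc |(∫ u in a..(a+ε), h u) + (∫ u in (b-ε)..b, h u)|
      ≤ |∫ u in a..(a+ε), h u| + |∫ u in (b-ε)..b, h u| := abs_add_le _ _
    _ ≤ ε + ε := add_le_add (ramp a (a+ε) (by linarith) (by linarith))
        (ramp (b-ε) b (by linarith) (by linarith))
    _ = 2 * ε := by ring


lemma SHARED {m : ℕ} {T t : ℝ} {ρ w : ℝ → ℝ → ℝ}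
    (ht : 0 < t) (htT : t ≤ T)
    (hcont : ContinuousOn (uncurry ρ) (Icc (0:ℝ) T ×ˢ univ))
    (hId1 : ∀ ξ : ℝ → ℝ → ℝ, ContDiff ℝ 1 (uncurry ξ) → (∀ t, Periodic (ξ t) 1) →
      (∃ A : ℝ, A < T ∧ ∀ t, A ≤ t → ∀ u, ξ t u = 0) →
      (∫ t in Ioc (0:ℝ) T, ∫ u in Ioc (0:ℝ) 1, (ρ t u)^m * deriv (ξ t) u)
        = - ∫ t in Ioc (0:ℝ) T, ∫ u in Ioc (0:ℝ) 1, w t u * ξ t u)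
    (hId2 : ∀ ξ : ℝ → ℝ → ℝ, ContDiff ℝ 1 (uncurry ξ) → (∀ t, Periodic (ξ t) 1) →
      (∃ A : ℝ, A < T ∧ ∀ t, A ≤ t → ∀ u, ξ t u = 0) →
      (∫ t in Ioc (0:ℝ) T, ∫ u in Ioc (0:ℝ) 1, ρ t u * deriv (fun s => ξ s u) t)
        + (∫ u in Ioc (0:ℝ) 1, ρ 0 u * ξ 0 u)
        - (∫ t in Ioc (0:ℝ) T, ∫ u in Ioc (0:ℝ) 1, w t u * deriv (ξ t) u) = 0)
    (χ : ℝ → ℝ) (hχ : ContDiff ℝ 2 χ) (hχper : Periodic χ 1)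
    (δ : ℝ) (hδ : 0 ≤ δ)
    (hRb : ∀ τ ∈ Ioc (0:ℝ) t, |∫ u in Ioc (0:ℝ) 1, ρ τ u ^ m * deriv (deriv χ) u| ≤ δ) :
    ∀ s ∈ Ico (0:ℝ) t,
      |(∫ u in Ioc (0:ℝ) 1, ρ s u * χ u) - (∫ u in Ioc (0:ℝ) 1, ρ 0 u * χ u)| ≤ t * δ := by
  have hχc : Continuous χ := hχ.continuous
  have hddχc : Continuous (deriv (deriv χ)) := by
    have h := (contDiff_succ_iff_deriv (n := 1)).1 (hχ : ContDiff ℝ (1+1) χ)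
    exact h.2.2.continuous_deriv le_rfl
  have hGc : ContinuousOn (fun τ => ∫ u in Ioc (0:ℝ) 1, ρ τ u * χ u) (Icc (0:ℝ) T) := by
    intro s hs
    apply cont_param (by norm_num) (fun τ u => ρ τ u * χ u) ?_ hs
    exact hcont.mul ((hχc.comp continuous_snd).continuousOn)
  have hRc : ContinuousOn (fun τ => ∫ u in Ioc (0:ℝ) 1, ρ τ u ^ m * deriv (deriv χ) u)
      (Icc (0:ℝ) T) := by
    intro s hs
    apply cont_param (by norm_num) (fun τ u => ρ τ u ^ m * deriv (deriv χ) u) ?_ hs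
    exact (hcont.pow m).mul ((hddχc.comp continuous_snd).continuousOn)
  exact DBR ht htT _ _ hGc hRc δ hδ hRb
    (fun φ hφ hvan => ENGINE hId1 hId2 χ hχ hχper φ hφ hvan)


end PME

open PME

/-- **Conservation on a component.** Let `(a,b)` be a connected component of the positivity set
`P_t` of a continuous weak solution of the PME on `[0,T] × 𝕋` with Lipschitz pressure and the
retention property. Then for every `s ∈ [0,t]` one has `ρ(s,a) = ρ(s,b) = 0` and
`∫_a^b ρ(s,u) du = ∫_a^b ρ(t,u) du > 0`. -/
theorem mass_conservation_on_component
    (m : ℕ) (hm : 2 ≤ m) (T : ℝ) (hT : 0 < T)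
    (ρ : ℝ → ℝ → ℝ) (hsol : IsWeakSolPMEOn m T ρ)
    (hcont : ContinuousOn (uncurry ρ) (Icc (0:ℝ) T ×ˢ univ))
    (K : NNReal)
    (hLip : LipschitzOnWith K
      (uncurry (fun t u => (m / (m - 1) : ℝ) * ρ t u ^ (m - 1))) (Icc (0:ℝ) T ×ˢ univ))
    (hret : ∀ s t : ℝ, 0 ≤ s → s ≤ t → t ≤ T →
      {u : ℝ | 0 < ρ s u} ⊆ {u : ℝ | 0 < ρ t u})
    (t : ℝ) (ht : 0 < t) (htT : t ≤ T)
    (a b : ℝ) (hab : a < b)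
    (ha : ρ t a = 0) (hb : ρ t b = 0) (hpos : ∀ u ∈ Ioo a b, 0 < ρ t u) :
    ∀ s : ℝ, 0 ≤ s → s ≤ t →
      ρ s a = 0 ∧ ρ s b = 0 ∧
      (∫ u in a..b, ρ s u) = (∫ u in a..b, ρ t u) ∧
      0 < ∫ u in a..b, ρ t u := by
  obtain ⟨hper, hrange, w, hwmeas, hwper, hwL2, hId1, hId2⟩ := hsol
  -- the endpoints stay empty up to time t
  have hza : ∀ s ∈ Icc (0:ℝ) t, ρ s a = 0 := by
    intro s hs
    by_contra hne
    have h0 : 0 < ρ s a := lt_of_le_of_ne (hrange s a).1 (Ne.symm hne)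
    have h1 := hret s t hs.1 hs.2 htT (show a ∈ {u : ℝ | 0 < ρ s u} from h0)
    have h2 : 0 < ρ t a := h1
    rw [ha] at h2
    exact lt_irrefl 0 h2
  have hzb : ∀ s ∈ Icc (0:ℝ) t, ρ s b = 0 := by
    intro s hs
    by_contra hne
    have h0 : 0 < ρ s b := lt_of_le_of_ne (hrange s b).1 (Ne.symm hne)
    have h1 := hret s t hs.1 hs.2 htT (show b ∈ {u : ℝ | 0 < ρ s u} from h0)
    have h2 : 0 < ρ t b := h1
    rw [hb] at h2
    exact lt_irrefl 0 h2
  -- b is at most one period away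
  have hb1 : b ≤ a + 1 := by
    by_contra hcon
    push_neg at hcon
    have h1 : a + 1 ∈ Ioo a b := ⟨by linarith, hcon⟩
    have h2 := hpos _ h1
    rw [hper t a, ha] at h2
    exact lt_irrefl 0 h2
  have htT' : t ∈ Icc (0:ℝ) T := ⟨ht.le, htT⟩
  have h0T : (0:ℝ) ∈ Icc (0:ℝ) T := ⟨le_rfl, hT.le⟩
  -- mass on (a,b)
  have hGρc : ContinuousOn (fun τ => ∫ u in Ioc a b, ρ τ u) (Icc (0:ℝ) T) :=
    fun s hs => cont_param hab.le ρ hcont hs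
  -- Step 1 : conservation on [0,t)
  have claim0 : ∀ s ∈ Ico (0:ℝ) t,
      (∫ u in Ioc a b, ρ s u) = (∫ u in Ioc a b, ρ 0 u) := by
    intro s hs
    have hkey : ∀ η : ℝ, 0 < η →
        |(∫ u in Ioc a b, ρ s u) - (∫ u in Ioc a b, ρ 0 u)| ≤ η := by
      intro η hη
      rcases lt_or_eq_of_le hb1 with hblt | hbeq
      · -- main case : b < a + 1
        have hB1 := B1_nonneg
        have hB2 := B2_nonneg
        set C0 : ℝ := 2 * ((K:ℝ) * (2 * B2 + 2 * B1 ^ 2)) with hC0def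
        have hC0 : 0 ≤ C0 := by positivity
        set ρb : ℝ := η / (4 * t * C0 + 4) with hρbdef
        have hρb : 0 < ρb := by positivity
        -- uniform continuity gives smallness of ρ near a and b
        have hKc : IsCompact (Icc (0:ℝ) t ×ˢ Icc (a-1) (b+1)) := isCompact_Icc.prod isCompact_Icc
        have hsub : Icc (0:ℝ) t ×ˢ Icc (a-1) (b+1) ⊆ Icc (0:ℝ) T ×ˢ univ :=
          prod_mono (Icc_subset_Icc le_rfl htT) (subset_univ _)
        have hUC := hKc.uniformContinuousOn_of_continuous (hcont.mono hsub)
        rw [Metric.uniformContinuousOn_iff] at hUC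
        obtain ⟨δu, hδu, hδu'⟩ := hUC ρb hρb
        set ε : ℝ := min (min (δu/2) ((b-a)/4)) (min (η/8) (1/2)) with hεdef
        have hε0 : 0 < ε := lt_min (lt_min (by linarith) (by linarith))
          (lt_min (by linarith) (by norm_num))
        have hεδu : ε < δu :=
          lt_of_le_of_lt (le_trans (min_le_left _ _) (min_le_left _ _)) (by linarith)
        have hεba : 2 * ε < b - a := by
          have hε4 : ε ≤ (b-a)/4 := le_trans (min_le_left _ _) (min_le_right _ _)
          linarith
        have hεη : ε ≤ η/8 := le_trans (min_le_right _ _) (min_le_left _ _)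
        have hε1 : ε ≤ 1/2 := le_trans (min_le_right _ _) (min_le_right _ _)
        have hsmall : ∀ τ ∈ Icc (0:ℝ) t, ∀ u, (|u - a| ≤ ε ∨ |u - b| ≤ ε) → ρ τ u ≤ ρb := by
          intro τ hτ u hu
          have key : ∀ y : ℝ, a ≤ y → y ≤ b → ρ τ y = 0 → |u - y| ≤ ε → ρ τ u ≤ ρb := by
            intro y hy1 hy2 hzy hc
            obtain ⟨hl, hr⟩ := abs_le.1 hc
            have hm1 : ((τ, u) : ℝ × ℝ) ∈ Icc (0:ℝ) t ×ˢ Icc (a-1) (b+1) :=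
              ⟨hτ, ⟨by linarith, by linarith⟩⟩
            have hm2 : ((τ, y) : ℝ × ℝ) ∈ Icc (0:ℝ) t ×ˢ Icc (a-1) (b+1) :=
              ⟨hτ, ⟨by linarith, by linarith⟩⟩
            have hd : dist ((τ, u) : ℝ × ℝ) (τ, y) < δu := by
              rw [Prod.dist_eq, dist_self, Real.dist_eq,
                max_eq_right (abs_nonneg (u - y))]
              exact lt_of_le_of_lt hc hεδu
            have hdd := hδu' (τ, u) hm1 (τ, y) hm2 hd
            have := hzy
            rw [show uncurry ρ (τ, u) = ρ τ u from rfl,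
              show uncurry ρ (τ, y) = ρ τ y from rfl, hzy, dist_zero_right,
              Real.norm_eq_abs] at hdd
            calc ρ τ u ≤ |ρ τ u| := le_abs_self _
              _ ≤ ρb := hdd.le
          rcases hu with hu | hu
          · exact key a le_rfl hab.le (hza τ hτ) hu
          · exact key b hab.le le_rfl (hzb τ hτ) hu
        -- geometry of the periodization point
        set c : ℝ := (a + b + 1) / 2 with hcdef
        have hac : a < c := by rw [hcdef]; linarith
        have hbc : b < c := by rw [hcdef]; linarith
        have hca : c < a + 1 := by rw [hcdef]; linarith
        -- flux bound
        have hflux := flux_bound hm ht htT hper hrange hcont hLip hab hε0 hεba hac hbc hca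
          hza hzb hρb.le hsmall
        have hχ := contDiff_chiper (a := a) (b := b) (ε := ε) (c := c) hε0 hac hbc hca
        have hδv : (0:ℝ) ≤ 2 * ((K:ℝ) * (2 * B2 + 2 * B1 ^ 2)) * ρb := by positivity
        have hDBR := SHARED ht htT hcont hId1 hId2 (chiper a b ε c) hχ chiper_periodic
          (2 * ((K:ℝ) * (2 * B2 + 2 * B1 ^ 2)) * ρb) hδv hflux s hs
        have hc1 := G_compare hper hrange hcont hab hε0 hεba hac hbc hca
          (τ := s) ⟨hs.1, le_trans hs.2.le htT⟩
        have hc2 := G_compare hper hrange hcont hab hε0 hεba hac hbc hca (τ := 0) h0T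
        -- the arithmetic
        have harr : t * (2 * ((K:ℝ) * (2 * B2 + 2 * B1 ^ 2)) * ρb) ≤ η / 4 := by
          have h4 : (0:ℝ) < 4 * t * C0 + 4 := by positivity
          rw [hρbdef]
          rw [show t * (2 * ((K:ℝ) * (2 * B2 + 2 * B1 ^ 2)) * (η / (4 * t * C0 + 4)))
            = (t * C0 * η) / (4 * t * C0 + 4) by rw [hC0def]; ring]
          rw [div_le_div_iff₀ h4 (by norm_num : (0:ℝ) < 4)]
          nlinarith
        set Ges : ℝ := ∫ u in Ioc (0:ℝ) 1, ρ s u * chiper a b ε c u with hGes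
        set Ge0 : ℝ := ∫ u in Ioc (0:ℝ) 1, ρ 0 u * chiper a b ε c u with hGe0
        calc |(∫ u in Ioc a b, ρ s u) - (∫ u in Ioc a b, ρ 0 u)|
            = |(-(Ges - (∫ u in Ioc a b, ρ s u))) + (Ges - Ge0)
              + (Ge0 - (∫ u in Ioc a b, ρ 0 u))| := by ring_nf
          _ ≤ |(-(Ges - (∫ u in Ioc a b, ρ s u))) + (Ges - Ge0)|
              + |Ge0 - (∫ u in Ioc a b, ρ 0 u)| := abs_add_le _ _
          _ ≤ |(-(Ges - (∫ u in Ioc a b, ρ s u)))| + |Ges - Ge0|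
              + |Ge0 - (∫ u in Ioc a b, ρ 0 u)| := by
                have := abs_add_le (-(Ges - (∫ u in Ioc a b, ρ s u))) (Ges - Ge0)
                linarith
          _ = |Ges - (∫ u in Ioc a b, ρ s u)| + |Ges - Ge0|
              + |Ge0 - (∫ u in Ioc a b, ρ 0 u)| := by rw [abs_neg]
          _ ≤ 2 * ε + t * (2 * ((K:ℝ) * (2 * B2 + 2 * B1 ^ 2)) * ρb) + 2 * ε := by
                have := add_le_add (add_le_add hc1 hDBR) hc2
                linarith
          _ ≤ η := by linarith
      · -- degenerate case : b = a + 1, full circle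
        have hRb : ∀ τ ∈ Ioc (0:ℝ) t,
            |∫ u in Ioc (0:ℝ) 1, ρ τ u ^ m * deriv (deriv (fun _ : ℝ => (1:ℝ))) u| ≤ 0 := by
          intro τ _
          have hdd : deriv (deriv (fun _ : ℝ => (1:ℝ))) = fun _ => (0:ℝ) := by
            rw [deriv_const']
            exact deriv_const' (𝕜 := ℝ) (c := (0:ℝ)) (F := ℝ)
          rw [hdd]
          simp
        have hDBR := SHARED ht htT hcont hId1 hId2 (fun _ => (1:ℝ)) contDiff_const
          (fun _ => rfl) 0 le_rfl hRb s hs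
        simp only [mul_one, mul_zero] at hDBR
        have hshift : ∀ τ : ℝ, (∫ u in Ioc (0:ℝ) 1, ρ τ u) = ∫ u in Ioc a b, ρ τ u := by
          intro τ
          rw [periodic_shift (hper τ) b, show b - 1 = a by linarith]
        rw [hshift s, hshift 0] at hDBR
        linarith [abs_nonneg ((∫ u in Ioc a b, ρ s u) - (∫ u in Ioc a b, ρ 0 u)), hη, hDBR]
    -- from ∀ η the equality
    have h0 : |(∫ u in Ioc a b, ρ s u) - (∫ u in Ioc a b, ρ 0 u)| ≤ 0 := by
      refine le_of_forall_pos_le_add (fun η hη => ?_)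
      simpa using hkey η hη
    have := abs_nonneg ((∫ u in Ioc a b, ρ s u) - (∫ u in Ioc a b, ρ 0 u))
    have habs : |(∫ u in Ioc a b, ρ s u) - (∫ u in Ioc a b, ρ 0 u)| = 0 := le_antisymm h0 this
    have := abs_eq_zero.1 habs
    linarith [this]
  -- Step 2 : conservation at t by continuity
  have claimt : (∫ u in Ioc a b, ρ t u) = (∫ u in Ioc a b, ρ 0 u) := by
    have hne : (𝓝[Ico (0:ℝ) t] t).NeBot := by
      apply mem_closure_iff_nhdsWithin_neBot.1
      rw [closure_Ico ht.ne]
      exact ⟨ht.le, le_rfl⟩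
    have h1 : Tendsto (fun τ => ∫ u in Ioc a b, ρ τ u) (𝓝[Ico (0:ℝ) t] t)
        (𝓝 (∫ u in Ioc a b, ρ t u)) := by
      apply Tendsto.mono_left ((hGρc t htT').tendsto)
      apply nhdsWithin_mono
      intro τ hτ
      exact ⟨hτ.1, le_trans hτ.2.le htT⟩
    have h2 : Tendsto (fun τ => ∫ u in Ioc a b, ρ τ u) (𝓝[Ico (0:ℝ) t] t)
        (𝓝 (∫ u in Ioc a b, ρ 0 u)) := by
      have heq : (fun τ => ∫ u in Ioc a b, ρ τ u) =ᶠ[𝓝[Ico (0:ℝ) t] t]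
          fun _ => ∫ u in Ioc a b, ρ 0 u := by
        filter_upwards [self_mem_nhdsWithin] with τ hτ
        exact claim0 τ hτ
      rw [tendsto_congr' heq]
      exact tendsto_const_nhds
    exact tendsto_nhds_unique h1 h2
  -- positivity of the mass
  have hpos_int : 0 < ∫ u in a..b, ρ t u := by
    apply intervalIntegral.intervalIntegral_pos_of_pos_on
    · exact (slice_cont hcont htT').intervalIntegrable a b
    · exact hpos
    · exact hab
  -- conclusion
  intro s hs0 hst
  refine ⟨hza s ⟨hs0, hst⟩, hzb s ⟨hs0, hst⟩, ?_, hpos_int⟩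
  rw [intervalIntegral.integral_of_le hab.le, intervalIntegral.integral_of_le hab.le]
  rcases eq_or_lt_of_le hst with rfl | hlt
  · rfl
  · rw [claim0 s ⟨hs0, hlt⟩, claimt]


end
end

section
/- Let m ≥ 2 be an integer, T > 0, and let ρ ∈ C^∞([0,T] × 𝕋) satisfy ∂_t ρ = ∂_{uu}(ρ^m) with 0 < ρ ≤ 1 on [0,T]×𝕋, and assume ‖∂_u ϖ(0,·)‖_{L^∞(𝕋)} ≤ C_Lip, where ϖ = (m/(m−1)) ρ^{m−1}. Set v = ρ^m. Then for every t* ∈ [0,T]: (2/m) ∫₀^{t*} ∫_𝕋 |∂_t v(t,u)|² du dt + ∫_𝕋 |∂_u v(t*,u)|² du ≤ (C_Lip)². -/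
open MeasureTheory Set Function Filter

noncomputable section

namespace PMEAux

/-- the uncurried power function `v = ρ^m` -/
noncomputable def VV (ρ : ℝ → ℝ → ℝ) (m : ℕ) : ℝ × ℝ → ℝ := fun p => ρ p.1 p.2 ^ m

/-- partial derivative in the second variable -/
noncomputable def DU (f : ℝ × ℝ → ℝ) : ℝ × ℝ → ℝ := fun p => fderiv ℝ f p (0, 1)

/-- partial derivative in the first variable -/
noncomputable def DT (f : ℝ × ℝ → ℝ) : ℝ × ℝ → ℝ := fun p => fderiv ℝ f p (1, 0)

variable {f : ℝ × ℝ → ℝ}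

theorem sliceU (hf : ContDiff ℝ (⊤ : ℕ∞) f) (t u : ℝ) :
    HasDerivAt (fun x => f (t, x)) (DU f (t, u)) u :=
  ((hf.differentiable (by simp) (t, u)).hasFDerivAt).comp_hasDerivAt u
    ((hasDerivAt_const u t).prodMk (hasDerivAt_id u))

theorem sliceT (hf : ContDiff ℝ (⊤ : ℕ∞) f) (t u : ℝ) :
    HasDerivAt (fun s => f (s, u)) (DT f (t, u)) t :=
  ((hf.differentiable (by simp) (t, u)).hasFDerivAt).comp_hasDerivAt t
    ((hasDerivAt_id t).prodMk (hasDerivAt_const t u))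

theorem contDiff_DU (hf : ContDiff ℝ (⊤ : ℕ∞) f) : ContDiff ℝ (⊤ : ℕ∞) (DU f) :=
  (hf.fderiv_right (by simp)).clm_apply contDiff_const

theorem contDiff_DT (hf : ContDiff ℝ (⊤ : ℕ∞) f) : ContDiff ℝ (⊤ : ℕ∞) (DT f) :=
  (hf.fderiv_right (by simp)).clm_apply contDiff_const

theorem fderiv_eval (hf : ContDiff ℝ (⊤ : ℕ∞) f) (w z p : ℝ × ℝ) :
    fderiv ℝ (fun q => fderiv ℝ f q w) p z = fderiv ℝ (fderiv ℝ f) p z w := by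
  have h1 : HasFDerivAt (fun q => fderiv ℝ f q w)
      ((ContinuousLinearMap.apply ℝ ℝ w).comp (fderiv ℝ (fderiv ℝ f) p)) p :=
    (ContinuousLinearMap.apply ℝ ℝ w).hasFDerivAt.comp p
      (((hf.fderiv_right (m := (⊤ : ℕ∞)) (by simp)).differentiable (by simp)) p).hasFDerivAt
  rw [h1.fderiv]; rfl

theorem fderiv_DU (hf : ContDiff ℝ (⊤ : ℕ∞) f) (p z : ℝ × ℝ) :
    fderiv ℝ (DU f) p z = fderiv ℝ (fderiv ℝ f) p z (0, 1) :=
  fderiv_eval hf _ _ _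

theorem fderiv_DT (hf : ContDiff ℝ (⊤ : ℕ∞) f) (p z : ℝ × ℝ) :
    fderiv ℝ (DT f) p z = fderiv ℝ (fderiv ℝ f) p z (1, 0) :=
  fderiv_eval hf _ _ _

theorem symmDD (hf : ContDiff ℝ (⊤ : ℕ∞) f) (p : ℝ × ℝ) : DT (DU f) p = DU (DT f) p := by
  show fderiv ℝ (DU f) p (1, 0) = fderiv ℝ (DT f) p (0, 1)
  rw [fderiv_DU hf, fderiv_DT hf]
  exact second_derivative_symmetric (fun y => ((hf.differentiable (by simp)) y).hasFDerivAt)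
    (((hf.fderiv_right (m := (⊤ : ℕ∞)) (by simp)).differentiable (by simp)) p).hasFDerivAt _ _

end PMEAux

open PMEAux

/-- **Energy estimate for the PME.** For a smooth solution `ρ` of `∂_t ρ = ∂_uu (ρ^m)` on
`[0,T] × 𝕋` with `0 < ρ ≤ 1` and initial pressure gradient bounded by `C_Lip`, setting
`v = ρ^m`, for every `t* ∈ [0,T]`:
`(2/m) ∫₀^{t*} ∫_𝕋 |∂_t v|² du dt + ∫_𝕋 |∂_u v(t*,·)|² du ≤ C_Lip²`. -/
theorem energy_estimate
    (m : ℕ) (hm : 2 ≤ m) (T : ℝ) (hT : 0 < T) (CLip : ℝ)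
    (ρ : ℝ → ℝ → ℝ)
    (hsm : ContDiff ℝ (⊤ : ℕ∞) (uncurry ρ))
    (hper : ∀ t, Periodic (ρ t) 1)
    (hpde : ∀ t ∈ Icc (0:ℝ) T, ∀ u : ℝ,
      deriv (fun s => ρ s u) t = deriv (deriv (fun v => ρ t v ^ m)) u)
    (hbd : ∀ t ∈ Icc (0:ℝ) T, ∀ u : ℝ, ρ t u ∈ Ioc (0:ℝ) 1)
    (hini : ∀ u : ℝ, |deriv (fun v => (m / (m - 1) : ℝ) * ρ 0 v ^ (m - 1)) u| ≤ CLip) :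
    ∀ tstar ∈ Icc (0:ℝ) T,
      (2 / m : ℝ) *
          (∫ t in (0:ℝ)..tstar, ∫ u in (0:ℝ)..1, (deriv (fun s => ρ s u ^ m) t) ^ 2)
        + (∫ u in (0:ℝ)..1, (deriv (fun v => ρ tstar v ^ m) u) ^ 2)
      ≤ CLip ^ 2 := by
  intro tstar htstar
  have hm2 : (2:ℝ) ≤ (m:ℝ) := by exact_mod_cast hm
  have hmpos : (0:ℝ) < (m:ℝ) := by linarith
  have hFsm : ContDiff ℝ (⊤ : ℕ∞) (VV ρ m) := hsm.pow m
  -- continuity facts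
  have hVuc : Continuous (DU (VV ρ m)) := (contDiff_DU hFsm).continuous
  have hVtc : Continuous (DT (VV ρ m)) := (contDiff_DT hFsm).continuous
  have hVuuc : Continuous (DU (DU (VV ρ m))) := (contDiff_DU (contDiff_DU hFsm)).continuous
  have hSc : Continuous (DU (DT (VV ρ m))) := (contDiff_DU (contDiff_DT hFsm)).continuous
  -- slice derivative facts
  have hAu : ∀ t u : ℝ, HasDerivAt (fun x => ρ t x ^ m) (DU (VV ρ m) (t, u)) u :=
    fun t u => sliceU hFsm t u
  have hAt : ∀ t u : ℝ, HasDerivAt (fun s => ρ s u ^ m) (DT (VV ρ m) (t, u)) t :=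
    fun t u => sliceT hFsm t u
  have hVu_u : ∀ t u : ℝ, HasDerivAt (fun x => DU (VV ρ m) (t, x)) (DU (DU (VV ρ m)) (t, u)) u :=
    fun t u => sliceU (contDiff_DU hFsm) t u
  have hVt_u : ∀ t u : ℝ, HasDerivAt (fun x => DT (VV ρ m) (t, x)) (DU (DT (VV ρ m)) (t, u)) u :=
    fun t u => sliceU (contDiff_DT hFsm) t u
  have hVu_t : ∀ t u : ℝ, HasDerivAt (fun s => DU (VV ρ m) (s, u)) (DU (DT (VV ρ m)) (t, u)) t := by
    intro t u
    have h := sliceT (contDiff_DU hFsm) t u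
    rwa [symmDD hFsm] at h
  have hρu : ∀ t u : ℝ, HasDerivAt (fun x => ρ t x) (DU (uncurry ρ) (t, u)) u :=
    fun t u => sliceU hsm t u
  have hρt : ∀ t u : ℝ, HasDerivAt (fun s => ρ s u) (DT (uncurry ρ) (t, u)) t :=
    fun t u => sliceT hsm t u
  -- chain rule identities
  have hVt_eq : ∀ t u : ℝ,
      DT (VV ρ m) (t, u) = (m : ℝ) * ρ t u ^ (m - 1) * DT (uncurry ρ) (t, u) :=
    fun t u => (hAt t u).unique ((hρt t u).pow m)
  have hVu_eq : ∀ t u : ℝ,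
      DU (VV ρ m) (t, u) = (m : ℝ) * ρ t u ^ (m - 1) * DU (uncurry ρ) (t, u) :=
    fun t u => (hAu t u).unique ((hρu t u).pow m)
  -- the PDE in terms of DT/DU
  have hpde' : ∀ t ∈ Icc (0:ℝ) T, ∀ u : ℝ,
      DT (uncurry ρ) (t, u) = DU (DU (VV ρ m)) (t, u) := by
    intro t ht u
    have h1 := hpde t ht u
    rw [(hρt t u).deriv] at h1
    have h2 : deriv (fun x : ℝ => ρ t x ^ m) = fun x => DU (VV ρ m) (t, x) :=
      funext fun x => (hAu t x).deriv
    rw [h2, (hVu_u t u).deriv] at h1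
    exact h1
  have hkey : ∀ t ∈ Icc (0:ℝ) T, ∀ u : ℝ,
      DT (VV ρ m) (t, u) = (m : ℝ) * ρ t u ^ (m - 1) * DU (DU (VV ρ m)) (t, u) := by
    intro t ht u
    rw [hVt_eq t u, hpde' t ht u]
  -- pointwise inequality
  have hpoint : ∀ t ∈ Icc (0:ℝ) T, ∀ u : ℝ,
      (1 / m : ℝ) * DT (VV ρ m) (t, u) ^ 2 ≤ DU (DU (VV ρ m)) (t, u) * DT (VV ρ m) (t, u) := by
    intro t ht u
    have hρ := hbd t ht u
    rw [hkey t ht u]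
    set a := DU (DU (VV ρ m)) (t, u) with ha
    have h1 : (0:ℝ) < ρ t u := hρ.1
    have h2 : ρ t u ≤ 1 := hρ.2
    have hb1 : ρ t u ^ (m - 1) ≤ 1 := pow_le_one₀ h1.le h2
    have hb0 : (0:ℝ) < ρ t u ^ (m - 1) := pow_pos h1 _
    have key : (0:ℝ) ≤ (m : ℝ) * ρ t u ^ (m - 1) * a ^ 2 * (1 - ρ t u ^ (m - 1)) :=
      mul_nonneg (by positivity) (by linarith)
    have P : ((m : ℝ) * ρ t u ^ (m - 1) * a) ^ 2
        ≤ (a * ((m : ℝ) * ρ t u ^ (m - 1) * a)) * m := by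
      nlinarith [mul_nonneg hmpos.le key]
    calc (1 / m : ℝ) * ((m : ℝ) * ρ t u ^ (m - 1) * a) ^ 2
        = ((m : ℝ) * ρ t u ^ (m - 1) * a) ^ 2 / m := by ring
      _ ≤ a * ((m : ℝ) * ρ t u ^ (m - 1) * a) := by
          rw [div_le_iff₀ hmpos]; exact P
  -- periodicity
  have hper' : ∀ t u : ℝ, VV ρ m (t, u + 1) = VV ρ m (t, u) := by
    intro t u
    show ρ t (u + 1) ^ m = ρ t u ^ m
    rw [hper t u]
  have hVuper : ∀ t : ℝ, DU (VV ρ m) (t, 1) = DU (VV ρ m) (t, 0) := by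
    intro t
    rw [← (sliceU hFsm t 1).deriv, ← (sliceU hFsm t 0).deriv]
    have he : (fun x : ℝ => VV ρ m (t, x + 1)) = fun x => VV ρ m (t, x) :=
      funext fun x => hper' t x
    calc deriv (fun x => VV ρ m (t, x)) 1
        = deriv (fun x => VV ρ m (t, x)) (0 + 1) := by norm_num
      _ = deriv (fun x => VV ρ m (t, x + 1)) 0 := (deriv_comp_add_const _ _ _).symm
      _ = deriv (fun x => VV ρ m (t, x)) 0 := by rw [he]
  have hVtper : ∀ t : ℝ, DT (VV ρ m) (t, 1) = DT (VV ρ m) (t, 0) := by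
    intro t
    have he : (fun s : ℝ => VV ρ m (s, 1)) = fun s => VV ρ m (s, 0) := by
      funext s
      have := hper' s 0
      simpa using this
    rw [← (sliceT hFsm t 1).deriv, ← (sliceT hFsm t 0).deriv, he]
  -- initial bound on Vu(0,·)
  have hpt0 : ∀ u : ℝ, DU (VV ρ m) (0, u) ^ 2 ≤ CLip ^ 2 := by
    intro u
    have hρ0 := hbd 0 (left_mem_Icc.mpr hT.le) u
    have hd : HasDerivAt (fun x => (m / (m - 1) : ℝ) * ρ 0 x ^ (m - 1))
        ((m / (m - 1) : ℝ) * (((m - 1 : ℕ) : ℝ) * ρ 0 u ^ (m - 1 - 1) * DU (uncurry ρ) (0, u))) u :=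
      ((hρu 0 u).pow (m - 1)).const_mul _
    have h1 := hini u
    rw [hd.deriv] at h1
    have hcast : ((m - 1 : ℕ) : ℝ) = (m : ℝ) - 1 := by
      rw [Nat.cast_sub (by omega)]; norm_num
    have hm1ne : (m : ℝ) - 1 ≠ 0 := by intro h; nlinarith
    have hexp : m - 1 - 1 = m - 2 := by omega
    have hc : (m / (m - 1) : ℝ) * (((m - 1 : ℕ) : ℝ) * ρ 0 u ^ (m - 1 - 1) * DU (uncurry ρ) (0, u))
        = (m : ℝ) * ρ 0 u ^ (m - 2) * DU (uncurry ρ) (0, u) := by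
      rw [hcast, hexp]
      field_simp
    rw [hc] at h1
    have hVu0 : DU (VV ρ m) (0, u)
        = ρ 0 u * ((m : ℝ) * ρ 0 u ^ (m - 2) * DU (uncurry ρ) (0, u)) := by
      rw [hVu_eq 0 u]
      have hpw : ρ 0 u ^ (m - 1) = ρ 0 u ^ (m - 2) * ρ 0 u := by
        rw [← pow_succ]
        congr 1
        omega
      rw [hpw]; ring
    have habs : |DU (VV ρ m) (0, u)| ≤ CLip := by
      rw [hVu0, abs_mul, abs_of_pos hρ0.1]
      calc ρ 0 u * |(m : ℝ) * ρ 0 u ^ (m - 2) * DU (uncurry ρ) (0, u)| ≤ 1 * CLip :=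
            mul_le_mul hρ0.2 h1 (abs_nonneg _) zero_le_one
        _ = CLip := one_mul _
    have h2 := abs_le.mp habs
    exact sq_le_sq' h2.1 h2.2
  have hcontU : ∀ t : ℝ, Continuous fun u => DU (VV ρ m) (t, u) :=
    fun t => hVuc.comp (continuous_const.prodMk continuous_id)
  have hcontT : ∀ t : ℝ, Continuous fun u => DT (VV ρ m) (t, u) :=
    fun t => hVtc.comp (continuous_const.prodMk continuous_id)
  have hcontUU : ∀ t : ℝ, Continuous fun u => DU (DU (VV ρ m)) (t, u) :=
    fun t => hVuuc.comp (continuous_const.prodMk continuous_id)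
  have hcontS : ∀ t : ℝ, Continuous fun u => DU (DT (VV ρ m)) (t, u) :=
    fun t => hSc.comp (continuous_const.prodMk continuous_id)
  have hE0 : (∫ u in (0:ℝ)..1, DU (VV ρ m) (0, u) ^ 2) ≤ CLip ^ 2 := by
    calc (∫ u in (0:ℝ)..1, DU (VV ρ m) (0, u) ^ 2) ≤ ∫ _u in (0:ℝ)..1, CLip ^ 2 :=
          intervalIntegral.integral_mono_on zero_le_one
            (((hcontU 0).pow 2).intervalIntegrable 0 1) intervalIntegrable_const
            (fun u _ => hpt0 u)
      _ = CLip ^ 2 := by simp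
  -- continuity of t ↦ ∫ (∂_t v)²
  have hgc : Continuous (fun s : ℝ => ∫ u in (0:ℝ)..1, DT (VV ρ m) (s, u) ^ 2) := by
    apply intervalIntegral.continuous_parametric_intervalIntegral_of_continuous'
      (f := fun s u => DT (VV ρ m) (s, u) ^ 2) (μ := volume)
    exact hVtc.pow 2
  -- FTC for the accumulated dissipation
  have hg : ∀ t : ℝ, HasDerivAt (fun r => ∫ s in (0:ℝ)..r, ∫ u in (0:ℝ)..1, DT (VV ρ m) (s, u) ^ 2)
      (∫ u in (0:ℝ)..1, DT (VV ρ m) (t, u) ^ 2) t :=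
    fun t => (hgc.integral_hasStrictDerivAt 0 t).hasDerivAt
  -- differentiation under the integral sign for E(t)
  have hE' : ∀ t0 : ℝ, HasDerivAt (fun t => ∫ u in (0:ℝ)..1, DU (VV ρ m) (t, u) ^ 2)
      (∫ u in (0:ℝ)..1, 2 * DU (VV ρ m) (t0, u) * DU (DT (VV ρ m)) (t0, u)) t0 := by
    intro t0
    obtain ⟨M, hM⟩ : ∃ M, ∀ p ∈ Icc (t0 - 1) (t0 + 1) ×ˢ Icc (0:ℝ) 1,
        ‖2 * DU (VV ρ m) p * DU (DT (VV ρ m)) p‖ ≤ M :=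
      (isCompact_Icc.prod isCompact_Icc).exists_bound_of_continuousOn
        (((continuous_const.mul hVuc).mul hSc).continuousOn)
    have hdiff : ∀ (u : ℝ), ∀ x : ℝ,
        HasDerivAt (fun x => DU (VV ρ m) (x, u) ^ 2)
          (2 * DU (VV ρ m) (x, u) * DU (DT (VV ρ m)) (x, u)) x := by
      intro u x
      have h := (hVu_t x u).pow 2
      norm_num at h
      exact h
    have := intervalIntegral.hasDerivAt_integral_of_dominated_loc_of_deriv_le
      (F := fun x u => DU (VV ρ m) (x, u) ^ 2)
      (F' := fun x u => 2 * DU (VV ρ m) (x, u) * DU (DT (VV ρ m)) (x, u))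
      (x₀ := t0) (s := Metric.ball t0 1) (a := 0) (b := 1) (bound := fun _ => M) (μ := volume) (Metric.ball_mem_nhds t0 one_pos)
      (Eventually.of_forall fun x => (((hcontU x).pow 2).aestronglyMeasurable))
      (((hcontU t0).pow 2).intervalIntegrable 0 1)
      (((continuous_const.mul (hcontU t0)).mul (hcontS t0)).aestronglyMeasurable)
      (ae_of_all _ fun u hu x hx => by
        refine hM (x, u) ⟨?_, ?_⟩
        · have := Real.ball_eq_Ioo t0 1 ▸ hx
          exact Ioo_subset_Icc_self this
        · rw [uIoc_of_le zero_le_one] at hu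
          exact Ioc_subset_Icc_self hu)
      intervalIntegrable_const
      (ae_of_all _ fun u hu x hx => hdiff u x)
    exact this.2
  -- integration by parts with periodic boundary terms
  have hIBP : ∀ t : ℝ, (∫ u in (0:ℝ)..1, DU (VV ρ m) (t, u) * DU (DT (VV ρ m)) (t, u))
      = -∫ u in (0:ℝ)..1, DU (DU (VV ρ m)) (t, u) * DT (VV ρ m) (t, u) := by
    intro t
    have hib := intervalIntegral.integral_mul_deriv_eq_deriv_mul
      (u := fun x => DU (VV ρ m) (t, x)) (u' := fun x => DU (DU (VV ρ m)) (t, x))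
      (v := fun x => DT (VV ρ m) (t, x)) (v' := fun x => DU (DT (VV ρ m)) (t, x))
      (fun x _ => hVu_u t x) (fun x _ => hVt_u t x)
      ((hcontUU t).intervalIntegrable 0 1) ((hcontS t).intervalIntegrable 0 1)
    rw [hVuper t, hVtper t, sub_self, zero_sub] at hib
    exact hib
  -- the derivative of the energy functional is nonpositive on [0,T]
  have hE'le : ∀ t ∈ Icc (0:ℝ) T,
      (2 / m : ℝ) * (∫ u in (0:ℝ)..1, DT (VV ρ m) (t, u) ^ 2)
        + (∫ u in (0:ℝ)..1, 2 * DU (VV ρ m) (t, u) * DU (DT (VV ρ m)) (t, u)) ≤ 0 := by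
    intro t ht
    have hmono : (∫ u in (0:ℝ)..1, (1 / m : ℝ) * DT (VV ρ m) (t, u) ^ 2)
        ≤ ∫ u in (0:ℝ)..1, DU (DU (VV ρ m)) (t, u) * DT (VV ρ m) (t, u) :=
      intervalIntegral.integral_mono_on zero_le_one
        ((continuous_const.mul ((hcontT t).pow 2)).intervalIntegrable 0 1)
        (((hcontUU t).mul (hcontT t)).intervalIntegrable 0 1)
        (fun u _ => hpoint t ht u)
    rw [intervalIntegral.integral_const_mul] at hmono
    have hsplit : (∫ u in (0:ℝ)..1, 2 * DU (VV ρ m) (t, u) * DU (DT (VV ρ m)) (t, u))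
        = 2 * ∫ u in (0:ℝ)..1, DU (VV ρ m) (t, u) * DU (DT (VV ρ m)) (t, u) := by
      rw [← intervalIntegral.integral_const_mul]
      apply intervalIntegral.integral_congr
      intro x _
      ring
    rw [hsplit, hIBP t]
    have h2 : (2 / m : ℝ) * (∫ u in (0:ℝ)..1, DT (VV ρ m) (t, u) ^ 2)
        = 2 * ((1 / m : ℝ) * ∫ u in (0:ℝ)..1, DT (VV ρ m) (t, u) ^ 2) := by ring
    rw [h2]
    linarith
  -- monotonicity of the energy functional
  have hΦ : ∀ t : ℝ, HasDerivAt
      (fun t => (2 / m : ℝ) * (∫ s in (0:ℝ)..t, ∫ u in (0:ℝ)..1, DT (VV ρ m) (s, u) ^ 2)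
        + ∫ u in (0:ℝ)..1, DU (VV ρ m) (t, u) ^ 2)
      ((2 / m : ℝ) * (∫ u in (0:ℝ)..1, DT (VV ρ m) (t, u) ^ 2)
        + ∫ u in (0:ℝ)..1, 2 * DU (VV ρ m) (t, u) * DU (DT (VV ρ m)) (t, u)) t :=
    fun t => (((hg t).const_mul (2 / m : ℝ)).add (hE' t))
  have hanti : AntitoneOn
      (fun t => (2 / m : ℝ) * (∫ s in (0:ℝ)..t, ∫ u in (0:ℝ)..1, DT (VV ρ m) (s, u) ^ 2)
        + ∫ u in (0:ℝ)..1, DU (VV ρ m) (t, u) ^ 2) (Icc 0 T) := by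
    apply antitoneOn_of_deriv_nonpos (convex_Icc 0 T)
    · exact fun x _ => (hΦ x).continuousAt.continuousWithinAt
    · exact fun x _ => (hΦ x).differentiableAt.differentiableWithinAt
    · intro x hx
      rw [(hΦ x).deriv]
      have hx' : x ∈ Ioo (0:ℝ) T := by rwa [interior_Icc] at hx
      exact hE'le x (Ioo_subset_Icc_self hx')
  have hfin := hanti (left_mem_Icc.mpr hT.le) htstar htstar.1
  simp only [intervalIntegral.integral_same, mul_zero, zero_add] at hfin
  -- rewrite the goal in terms of DU/DT
  have eqn1 : (∫ t in (0:ℝ)..tstar, ∫ u in (0:ℝ)..1, (deriv (fun s => ρ s u ^ m) t) ^ 2)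
      = ∫ t in (0:ℝ)..tstar, ∫ u in (0:ℝ)..1, DT (VV ρ m) (t, u) ^ 2 := by
    apply intervalIntegral.integral_congr
    intro t _
    apply intervalIntegral.integral_congr
    intro u _
    exact congrArg (· ^ 2) ((hAt t u).deriv)
  have eqn2 : (∫ u in (0:ℝ)..1, (deriv (fun v => ρ tstar v ^ m) u) ^ 2)
      = ∫ u in (0:ℝ)..1, DU (VV ρ m) (tstar, u) ^ 2 := by
    apply intervalIntegral.integral_congr
    intro u _
    exact congrArg (· ^ 2) ((hAu tstar u).deriv)
  rw [eqn1, eqn2]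
  linarith

end
end

section
/- Let T > 0, C > 0 and s ∈ (1/2, 1). There exists C' > 0 depending only on C, T and s such that the following holds: for every v ∈ C¹([0,T] × 𝕋) satisfying ‖v‖_{L^∞([0,T]×𝕋)} ≤ 1, ‖∂_t v‖_{L²([0,T]×𝕋)} ≤ C and sup_{t∈[0,T]} ‖∂_u v(t,·)‖_{L²(𝕋)} ≤ C, one has |v(t,u) − v(t̂,û)| ≤ C' ( |t − t̂|^{(1−s)/2} + d(u,û)^{1/2} ) for all t, t̂ ∈ [0,T] and u, û ∈ 𝕋, where d denotes the distance on 𝕋. -/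
open MeasureTheory Set Function Filter

noncomputable section


private lemma cs_interval {f : ℝ → ℝ} (hf : Continuous f) {a b : ℝ} (hab : a ≤ b) :
    |∫ x in a..b, f x| ≤ Real.sqrt (b - a) * Real.sqrt (∫ x in a..b, (f x)^2) := by
  have h1 : |∫ x in a..b, f x| ≤ ∫ x in a..b, |f x| :=
    intervalIntegral.abs_integral_le_integral_abs hab
  obtain ⟨M, hM⟩ := (isCompact_Icc (a := a) (b := b)).exists_bound_of_continuousOn hf.continuousOn
  have hmem : MemLp (fun x => |f x|) (ENNReal.ofReal 2) (volume.restrict (Ioc a b)) := by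
    apply MemLp.of_bound (hf.abs.aestronglyMeasurable.restrict) M
    filter_upwards [ae_restrict_mem measurableSet_Ioc] with x hx
    simpa using hM x (Ioc_subset_Icc_self hx)
  have hmem1 : MemLp (fun _ : ℝ => (1:ℝ)) (ENNReal.ofReal 2) (volume.restrict (Ioc a b)) :=
    memLp_const 1
  have hconj : (2:ℝ).HolderConjugate 2 := Real.HolderConjugate.two_two
  have h2 := MeasureTheory.integral_mul_le_Lp_mul_Lq_of_nonneg hconj
    (f := fun x => |f x|) (g := fun _ => (1:ℝ)) (μ := volume.restrict (Ioc a b))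
    (Eventually.of_forall fun x => abs_nonneg _) (Eventually.of_forall fun _ => zero_le_one)
    hmem hmem1
  simp only [mul_one] at h2
  have e1 : (∫ x in a..b, |f x|) = ∫ x, |f x| ∂(volume.restrict (Ioc a b)) := by
    rw [intervalIntegral.integral_of_le hab]
  have e2 : (∫ x, |f x| ^ (2:ℝ) ∂(volume.restrict (Ioc a b))) = ∫ x in a..b, (f x)^2 := by
    rw [intervalIntegral.integral_of_le hab]
    apply integral_congr_ae
    filter_upwards with x
    rw [Real.rpow_two, sq_abs]
  have e3 : (∫ _x : ℝ, (1:ℝ) ^ (2:ℝ) ∂(volume.restrict (Ioc a b))) = b - a := by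
    simp [Real.volume_Ioc, ENNReal.toReal_ofReal (sub_nonneg.2 hab), hab]
  rw [e2, e3] at h2
  calc |∫ x in a..b, f x| ≤ ∫ x in a..b, |f x| := h1
    _ ≤ (∫ x in a..b, (f x)^2) ^ ((1:ℝ)/2) * (b - a) ^ ((1:ℝ)/2) := by rw [e1]; exact h2
    _ = Real.sqrt (b - a) * Real.sqrt (∫ x in a..b, (f x)^2) := by
        rw [← Real.sqrt_eq_rpow, ← Real.sqrt_eq_rpow, mul_comm]


private lemma hasDerivAt_snd' (v : ℝ → ℝ → ℝ) (hv : ContDiff ℝ 1 (uncurry v)) (t x : ℝ) :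
    HasDerivAt (v t) (fderiv ℝ (uncurry v) (t, x) (0, 1)) x := by
  have h1 : HasDerivAt (fun y : ℝ => ((t, y) : ℝ × ℝ)) ((0 : ℝ), (1 : ℝ)) x :=
    (hasDerivAt_const x t).prodMk (hasDerivAt_id x)
  have := ((hv.differentiable one_ne_zero) (t, x)).hasFDerivAt.comp_hasDerivAt x h1
  simpa [uncurry, Function.comp_def] using this

private lemma hasDerivAt_fst' (v : ℝ → ℝ → ℝ) (hv : ContDiff ℝ 1 (uncurry v)) (t x : ℝ) :
    HasDerivAt (fun τ => v τ x) (fderiv ℝ (uncurry v) (t, x) (1, 0)) t := by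
  have h1 : HasDerivAt (fun τ : ℝ => ((τ, x) : ℝ × ℝ)) ((1 : ℝ), (0 : ℝ)) t :=
    (hasDerivAt_id t).prodMk (hasDerivAt_const t x)
  have := ((hv.differentiable one_ne_zero) (t, x)).hasFDerivAt.comp_hasDerivAt t h1
  simpa [uncurry, Function.comp_def] using this

private lemma cont_derivu (v : ℝ → ℝ → ℝ) (hv : ContDiff ℝ 1 (uncurry v)) (t : ℝ) :
    Continuous (deriv (v t)) := by
  have h : deriv (v t) = fun x => fderiv ℝ (uncurry v) (t, x) (0, 1) :=
    funext fun x => (hasDerivAt_snd' v hv t x).deriv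
  rw [h]
  exact ((hv.continuous_fderiv one_ne_zero).comp (Continuous.prodMk_right t)).clm_apply continuous_const

private lemma cont_derivt (v : ℝ → ℝ → ℝ) (hv : ContDiff ℝ 1 (uncurry v)) :
    Continuous (fun p : ℝ × ℝ => deriv (fun τ => v τ p.2) p.1) := by
  have h : (fun p : ℝ × ℝ => deriv (fun τ => v τ p.2) p.1)
      = fun p => fderiv ℝ (uncurry v) p (1, 0) := by
    funext p; exact (hasDerivAt_fst' v hv p.1 p.2).deriv
  rw [h]
  exact (hv.continuous_fderiv one_ne_zero).clm_apply continuous_const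

private lemma periodic_derivu (v : ℝ → ℝ → ℝ) (hper : ∀ t, Periodic (v t) 1) (t : ℝ) :
    Periodic (deriv (v t)) 1 := by
  intro x
  rw [← deriv_comp_add_const]
  congr 1
  funext y
  exact hper t y

private lemma spatial (C : ℝ) (hC : 0 ≤ C) (v : ℝ → ℝ → ℝ) (hv : ContDiff ℝ 1 (uncurry v))
    (hper : ∀ t, Periodic (v t) 1) (t : ℝ)
    (hE : (∫ u in (0:ℝ)..1, (deriv (v t) u) ^ 2) ≤ C ^ 2)
    (a b : ℝ) (hab : a ≤ b) (h1 : b - a ≤ 1) :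
    |v t b - v t a| ≤ C * Real.sqrt (b - a) := by
  set D := deriv (v t) with hD
  have hcont : Continuous D := cont_derivu v hv t
  have hper' : Periodic D 1 := periodic_derivu v hper t
  have hcont2 : Continuous (fun x => (D x)^2) := hcont.pow 2
  have hftc : ∫ x in a..b, D x = v t b - v t a := by
    apply intervalIntegral.integral_eq_sub_of_hasDerivAt
    · intro x _
      exact (hasDerivAt_snd' v hv t x).differentiableAt.hasDerivAt
    · exact hcont.intervalIntegrable a b
  have hmono : (∫ x in a..b, (D x)^2) ≤ ∫ x in a..(a+1), (D x)^2 :=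
    intervalIntegral.integral_mono_interval le_rfl hab (by linarith)
      (Eventually.of_forall fun x => sq_nonneg _) (hcont2.intervalIntegrable a (a+1))
  have hp2 : Periodic (fun x => (D x)^2) 1 := fun x => by simp [hper' x]
  have hshift : (∫ x in a..(a+1), (D x)^2) = ∫ x in (0:ℝ)..1, (D x)^2 := by
    simpa using hp2.intervalIntegral_add_eq a 0
  have hsq : Real.sqrt (∫ x in a..b, (D x)^2) ≤ C := by
    rw [show C = Real.sqrt (C^2) by rw [Real.sqrt_sq hC]]
    exact Real.sqrt_le_sqrt (by linarith [hE, hmono, hshift.le, hshift.ge])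
  calc |v t b - v t a| = |∫ x in a..b, D x| := by rw [hftc]
    _ ≤ Real.sqrt (b - a) * Real.sqrt (∫ x in a..b, (D x)^2) := cs_interval hcont hab
    _ ≤ Real.sqrt (b - a) * C := by
        apply mul_le_mul_of_nonneg_left hsq (Real.sqrt_nonneg _)
    _ = C * Real.sqrt (b - a) := mul_comm _ _

private lemma fubini_rect {G : ℝ → ℝ → ℝ} (hG : Continuous (uncurry G))
    {t' t u r : ℝ} (ht : t' ≤ t) (hr : 0 ≤ r) :
    (∫ y in u..u+r, ∫ τ in t'..t, G τ y) = ∫ τ in t'..t, ∫ y in u..u+r, G τ y := by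
  have hu : u ≤ u + r := by linarith
  have hint : Integrable (uncurry fun y τ => G τ y)
      ((volume.restrict (Ioc u (u+r))).prod (volume.restrict (Ioc t' t))) := by
    rw [Measure.prod_restrict]
    have h1 : IntegrableOn (uncurry fun y τ => G τ y) ((Icc u (u+r)) ×ˢ (Icc t' t))
        (volume.prod volume) := by
      rw [← Measure.volume_eq_prod]
      exact ContinuousOn.integrableOn_compact (isCompact_Icc.prod isCompact_Icc)
        (hG.comp continuous_swap).continuousOn
    rw [← Measure.volume_eq_prod]
    exact h1.mono_set (prod_mono Ioc_subset_Icc_self Ioc_subset_Icc_self)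
  have hswap := MeasureTheory.integral_integral_swap hint
  rw [intervalIntegral.integral_of_le hu, intervalIntegral.integral_of_le ht]
  simp_rw [intervalIntegral.integral_of_le ht, intervalIntegral.integral_of_le hu]
  exact hswap

private lemma temporal (T C : ℝ) (hC : 0 < C) (v : ℝ → ℝ → ℝ)
    (hv : ContDiff ℝ 1 (uncurry v)) (hper : ∀ t, Periodic (v t) 1)
    (hN : (∫ t in (0:ℝ)..T, ∫ u in (0:ℝ)..1, (deriv (fun τ => v τ u) t) ^ 2) ≤ C ^ 2)
    (hE : ∀ t ∈ Icc (0:ℝ) T, (∫ u in (0:ℝ)..1, (deriv (v t) u) ^ 2) ≤ C ^ 2)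
    {t t' : ℝ} (ht : t ∈ Icc (0:ℝ) T) (ht' : t' ∈ Icc (0:ℝ) T) (ht't : t' ≤ t)
    (hle1 : t - t' ≤ 1) (u : ℝ) :
    |v t u - v t' u| ≤ 3 * C * (t - t') ^ ((1:ℝ)/4) := by
  rcases eq_or_lt_of_le ht't with rfl | htlt
  · simp [Real.zero_rpow]
  set h : ℝ := t - t' with hh
  have hhpos : 0 < h := by simp [hh]; linarith
  set r : ℝ := Real.sqrt h with hr
  have hrpos : 0 < r := Real.sqrt_pos.2 hhpos
  have hrle1 : r ≤ 1 := by
    rw [hr, show (1:ℝ) = Real.sqrt 1 by simp]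
    exact Real.sqrt_le_sqrt hle1
  set G : ℝ → ℝ → ℝ := fun τ y => deriv (fun σ => v σ y) τ with hG
  have hGc : Continuous (uncurry G) := cont_derivt v hv
  have hGcy : ∀ y, Continuous (fun τ => G τ y) := fun y =>
    hGc.comp (continuous_id.prodMk continuous_const)
  have hGcτ : ∀ τ, Continuous (fun y => G τ y) := fun τ =>
    hGc.comp (continuous_const.prodMk continuous_id)
  have hvc : Continuous (uncurry v) := hv.continuous
  have hvt : ∀ t, Continuous (v t) := fun t => hvc.comp (continuous_const.prodMk continuous_id)
  -- FTC in time
  have hftc : ∀ y, v t y - v t' y = ∫ τ in t'..t, G τ y := by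
    intro y
    rw [intervalIntegral.integral_eq_sub_of_hasDerivAt
      (fun τ _ => (hasDerivAt_fst' v hv τ y).differentiableAt.hasDerivAt)
      ((hGcy y).intervalIntegrable t' t)]
  -- step 2
  have hI : (∫ y in u..u+r, (v t y - v t' y)) = ∫ τ in t'..t, ∫ y in u..u+r, G τ y := by
    rw [← fubini_rect hGc ht't hrpos.le]
    apply intervalIntegral.integral_congr
    intro y _
    exact hftc y
  -- decomposition
  have hur : u ≤ u + r := by linarith
  have hint1 : ∀ s, IntervalIntegrable (v s) volume u (u+r) :=
    fun s => (hvt s).intervalIntegrable _ _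
  have e1 : ∀ s, (∫ y in u..u+r, (v s u - v s y)) = r * v s u - ∫ y in u..u+r, v s y := by
    intro s
    rw [intervalIntegral.integral_sub intervalIntegrable_const (hint1 s),
      intervalIntegral.integral_const]
    simp [smul_eq_mul]
  have e3 : (∫ y in u..u+r, (v t y - v t' y))
      = (∫ y in u..u+r, v t y) - ∫ y in u..u+r, v t' y :=
    intervalIntegral.integral_sub (hint1 t) (hint1 t')
  have hdecomp : r * (v t u - v t' u)
      = (∫ y in u..u+r, (v t u - v t y)) - (∫ y in u..u+r, (v t' u - v t' y))
        + (∫ y in u..u+r, (v t y - v t' y)) := by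
    rw [e1 t, e1 t', e3]; ring
  -- bound on the two oscillation terms
  have hB : ∀ s ∈ Icc (0:ℝ) T, |∫ y in u..u+r, (v s u - v s y)| ≤ C * Real.sqrt r * r := by
    intro s hs
    have hb : ∀ y ∈ Set.uIoc u (u+r), ‖v s u - v s y‖ ≤ C * Real.sqrt r := by
      intro y hy
      rw [Set.uIoc_of_le hur] at hy
      have h1 : |v s y - v s u| ≤ C * Real.sqrt (y - u) :=
        spatial C hC.le v hv hper s (hE s hs) u y hy.1.le (by linarith [hy.2, hrle1])
      have h2 : Real.sqrt (y - u) ≤ Real.sqrt r := Real.sqrt_le_sqrt (by linarith [hy.2])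
      rw [Real.norm_eq_abs, abs_sub_comm]
      calc |v s y - v s u| ≤ C * Real.sqrt (y - u) := h1
        _ ≤ C * Real.sqrt r := by nlinarith
    have := intervalIntegral.norm_integral_le_of_norm_le_const hb
    simpa [abs_of_pos hrpos] using this
  -- bound on the main term
  set J : ℝ → ℝ := fun τ => ∫ y in u..u+r, (G τ y)^2 with hJdef
  have hJnn : ∀ τ, 0 ≤ J τ :=
    fun τ => intervalIntegral.integral_nonneg hur (fun y _ => sq_nonneg _)
  have hG2c : Continuous (uncurry fun τ y => (G τ y)^2) := hGc.pow 2
  have hJc : Continuous J :=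
    intervalIntegral.continuous_parametric_intervalIntegral_of_continuous' hG2c _ _
  have hIc : Continuous (fun τ => ∫ y in u..u+r, G τ y) :=
    intervalIntegral.continuous_parametric_intervalIntegral_of_continuous' hGc _ _
  have hKc : Continuous (fun τ => ∫ y in (0:ℝ)..1, (G τ y)^2) :=
    intervalIntegral.continuous_parametric_intervalIntegral_of_continuous' hG2c _ _
  have hinner : ∀ τ, |∫ y in u..u+r, G τ y| ≤ Real.sqrt r * Real.sqrt (J τ) := by
    intro τ
    have := cs_interval (hGcτ τ) hur
    simpa [add_sub_cancel_left] using this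
  have hK : ∀ τ, J τ ≤ ∫ y in (0:ℝ)..1, (G τ y)^2 := by
    intro τ
    have hper2 : Periodic (fun y => (G τ y)^2) 1 := by
      intro y
      have hvy : (fun σ => v σ (y + 1)) = fun σ => v σ y := funext fun σ => hper σ y
      simp only [hG, hvy]
    have hmono : J τ ≤ ∫ y in u..u+1, (G τ y)^2 :=
      intervalIntegral.integral_mono_interval le_rfl hur (by linarith)
        (Eventually.of_forall fun y => sq_nonneg _) (((hGcτ τ).pow 2).intervalIntegrable _ _)
    calc J τ ≤ _ := hmono
      _ = _ := by simpa using hper2.intervalIntegral_add_eq u 0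
  have hJint : (∫ τ in t'..t, J τ) ≤ C^2 := by
    calc (∫ τ in t'..t, J τ) ≤ ∫ τ in t'..t, (∫ y in (0:ℝ)..1, (G τ y)^2) :=
        intervalIntegral.integral_mono_on ht't (hJc.intervalIntegrable _ _)
          (hKc.intervalIntegrable _ _) (fun τ _ => hK τ)
      _ ≤ ∫ τ in (0:ℝ)..T, (∫ y in (0:ℝ)..1, (G τ y)^2) :=
        intervalIntegral.integral_mono_interval ht'.1 ht't ht.2
          (Eventually.of_forall fun τ =>
            intervalIntegral.integral_nonneg zero_le_one (fun y _ => sq_nonneg _))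
          (hKc.intervalIntegrable _ _)
      _ ≤ C^2 := hN
  have step4 : Real.sqrt (∫ τ in t'..t, J τ) ≤ C := by
    rw [show C = Real.sqrt (C^2) by rw [Real.sqrt_sq hC.le]]
    exact Real.sqrt_le_sqrt hJint
  have step3 : (∫ τ in t'..t, Real.sqrt (J τ)) ≤ Real.sqrt h * Real.sqrt (∫ τ in t'..t, J τ) := by
    have hcs := cs_interval (hJc.sqrt) ht't
    have heq : (∫ τ in t'..t, (Real.sqrt (J τ))^2) = ∫ τ in t'..t, J τ :=
      intervalIntegral.integral_congr (fun τ _ => Real.sq_sqrt (hJnn τ))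
    calc (∫ τ in t'..t, Real.sqrt (J τ)) ≤ |∫ τ in t'..t, Real.sqrt (J τ)| := le_abs_self _
      _ ≤ Real.sqrt (t - t') * Real.sqrt (∫ τ in t'..t, (Real.sqrt (J τ))^2) := hcs
      _ = Real.sqrt h * Real.sqrt (∫ τ in t'..t, J τ) := by rw [heq]
  have hIb : |∫ τ in t'..t, ∫ y in u..u+r, G τ y| ≤ Real.sqrt r * (Real.sqrt h * C) := by
    have step1 : |∫ τ in t'..t, ∫ y in u..u+r, G τ y|
        ≤ ∫ τ in t'..t, Real.sqrt r * Real.sqrt (J τ) := by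
      calc |∫ τ in t'..t, ∫ y in u..u+r, G τ y|
          ≤ ∫ τ in t'..t, |∫ y in u..u+r, G τ y| :=
            intervalIntegral.abs_integral_le_integral_abs ht't
        _ ≤ _ := intervalIntegral.integral_mono_on ht't (hIc.abs.intervalIntegrable _ _)
            ((continuous_const.mul hJc.sqrt).intervalIntegrable _ _) (fun τ _ => hinner τ)
    have step2 : (∫ τ in t'..t, Real.sqrt r * Real.sqrt (J τ))
        = Real.sqrt r * ∫ τ in t'..t, Real.sqrt (J τ) :=
      intervalIntegral.integral_const_mul _ _
    have hs3 : Real.sqrt h * Real.sqrt (∫ τ in t'..t, J τ) ≤ Real.sqrt h * C := by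
      nlinarith [Real.sqrt_nonneg h, Real.sqrt_nonneg (∫ τ in t'..t, J τ)]
    calc |∫ τ in t'..t, ∫ y in u..u+r, G τ y| ≤ _ := step1
      _ = Real.sqrt r * ∫ τ in t'..t, Real.sqrt (J τ) := step2
      _ ≤ Real.sqrt r * (Real.sqrt h * C) := by
          have := step3.trans hs3
          nlinarith [Real.sqrt_nonneg r]
  -- assemble
  have hsh : Real.sqrt h = r := rfl
  have habs : r * |v t u - v t' u| ≤ 3 * C * Real.sqrt r * r := by
    have h0 : r * |v t u - v t' u| = |r * (v t u - v t' u)| := by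
      rw [abs_mul, abs_of_pos hrpos]
    rw [h0, hdecomp]
    have tri : |(∫ y in u..u+r, (v t u - v t y)) - (∫ y in u..u+r, (v t' u - v t' y))
        + (∫ y in u..u+r, (v t y - v t' y))|
        ≤ |∫ y in u..u+r, (v t u - v t y)| + |∫ y in u..u+r, (v t' u - v t' y)|
          + |∫ y in u..u+r, (v t y - v t' y)| := by
      calc _ ≤ |(∫ y in u..u+r, (v t u - v t y)) - (∫ y in u..u+r, (v t' u - v t' y))|
            + |∫ y in u..u+r, (v t y - v t' y)| := abs_add_le _ _
        _ ≤ _ := by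
            have := abs_sub (∫ y in u..u+r, (v t u - v t y)) (∫ y in u..u+r, (v t' u - v t' y))
            linarith
    have h3 : |∫ y in u..u+r, (v t y - v t' y)| ≤ Real.sqrt r * (Real.sqrt h * C) := by
      rw [hI]; exact hIb
    have h1 := hB t ht
    have h2 := hB t' ht'
    rw [hsh] at h3
    calc _ ≤ _ := tri
      _ ≤ 3 * C * Real.sqrt r * r := by nlinarith [Real.sqrt_nonneg r]
  have hfin : |v t u - v t' u| ≤ 3 * C * Real.sqrt r := by
    have := (mul_le_mul_iff_right₀ hrpos).mp (by linarith [habs] :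
      r * |v t u - v t' u| ≤ r * (3 * C * Real.sqrt r))
    exact this
  have hq : Real.sqrt r = h ^ ((1:ℝ)/4) := by
    rw [hr, Real.sqrt_eq_rpow, Real.sqrt_eq_rpow, ← Real.rpow_mul hhpos.le]
    norm_num
  rw [← hq]
  exact hfin


/-- **Hölder estimate from energy bounds.** Let `T > 0`, `C > 0` and `s ∈ (1/2, 1)`. There is a
constant `C\'`, depending only on `C`, `T` and `s`, such that every `C¹` function
`v : [0,T] × 𝕋 → ℝ` (the torus being represented by `1`-periodic functions on `ℝ`) with
`‖v‖_∞ ≤ 1`, `‖∂_t v‖_{L²([0,T]×𝕋)} ≤ C` and `sup_{t∈[0,T]} ‖∂_u v(t,·)‖_{L²(𝕋)} ≤ C`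
satisfies `|v(t,u) - v(t̂,û)| ≤ C\' (|t-t̂|^{(1-s)/2} + d(u,û)^{1/2})`, `d` being the torus
distance. -/
theorem holder_estimate
    (T C s : ℝ) (hT : 0 < T) (hC : 0 < C) (hs : s ∈ Ioo (1/2 : ℝ) 1) :
    ∃ C' : ℝ, 0 < C' ∧
      ∀ v : ℝ → ℝ → ℝ,
        ContDiff ℝ 1 (uncurry v) →
        (∀ t, Periodic (v t) 1) →
        (∀ t ∈ Icc (0:ℝ) T, ∀ u : ℝ, |v t u| ≤ 1) →
        (∫ t in (0:ℝ)..T, ∫ u in (0:ℝ)..1, (deriv (fun τ => v τ u) t) ^ 2) ≤ C ^ 2 →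
        (∀ t ∈ Icc (0:ℝ) T, (∫ u in (0:ℝ)..1, (deriv (v t) u) ^ 2) ≤ C ^ 2) →
        ∀ t ∈ Icc (0:ℝ) T, ∀ t' ∈ Icc (0:ℝ) T, ∀ u u' : ℝ,
          |v t u - v t' u'| ≤
            C' * (|t - t'| ^ ((1 - s) / 2) +
              (dist ((u : UnitAddCircle)) ((u' : UnitAddCircle))) ^ ((1:ℝ) / 2)) := by
  obtain ⟨hs1, hs2⟩ := hs
  refine ⟨3*C + 2, by linarith, ?_⟩
  intro v hv hper hbd hN hE t ht t' ht' u u'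
  set e : ℝ := (1 - s)/2 with he
  have he0 : 0 < e := by rw [he]; linarith
  have he4 : e ≤ 1/4 := by rw [he]; linarith
  set k : ℤ := round (u - u') with hk
  set w : ℝ := u' + (k:ℝ) with hw
  set d : ℝ := dist ((u : UnitAddCircle)) ((u' : UnitAddCircle)) with hdd
  have hd : d = |u - w| := by
    rw [hdd, dist_eq_norm]
    have h1 : ((u:UnitAddCircle)) - ((u':UnitAddCircle)) = ((u - u' : ℝ) : UnitAddCircle) := by
      norm_cast
    rw [h1, UnitAddCircle.norm_eq]
    congr 1
    rw [hw, hk]; ring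
  have hd2 : |u - w| ≤ 1/2 := by
    have : u - w = u - u' - (round (u - u') : ℝ) := by rw [hw, hk]; ring
    rw [this]
    exact abs_sub_round (u - u')
  have hvw : v t' w = v t' u' := by
    have h2 := (hper t').int_mul k u'
    simpa [hw, mul_comm] using h2
  -- spatial piece
  have hsp : |v t u - v t w| ≤ C * Real.sqrt d := by
    rw [hd]
    rcases le_total w u with hwu | huw
    · have habs : |u - w| = u - w := abs_of_nonneg (by linarith)
      rw [habs] at hd2 ⊢
      exact spatial C hC.le v hv hper t (hE t ht) w u hwu (by linarith)
    · have habs : |u - w| = w - u := by rw [abs_sub_comm]; exact abs_of_nonneg (by linarith)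
      rw [habs] at hd2 ⊢
      rw [abs_sub_comm]
      exact spatial C hC.le v hv hper t (hE t ht) u w huw (by linarith)
  -- temporal piece
  have htp : |v t w - v t' w| ≤ (3*C + 2) * |t - t'| ^ e := by
    have hrpnn : (0:ℝ) ≤ |t - t'| ^ e := Real.rpow_nonneg (abs_nonneg _) _
    rcases le_or_gt |t - t'| 1 with hle | hgt
    · have hq : |v t w - v t' w| ≤ 3 * C * |t - t'| ^ ((1:ℝ)/4) := by
        rcases le_total t' t with h12 | h12
        · have habs : |t - t'| = t - t' := abs_of_nonneg (by linarith)
          rw [habs] at hle ⊢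
          exact temporal T C hC v hv hper hN hE ht ht' h12 hle w
        · have habs : |t - t'| = t' - t := by rw [abs_sub_comm]; exact abs_of_nonneg (by linarith)
          rw [habs] at hle ⊢
          rw [abs_sub_comm]
          exact temporal T C hC v hv hper hN hE ht' ht h12 hle w
      have hmono : |t - t'| ^ ((1:ℝ)/4) ≤ |t - t'| ^ e := by
        rcases eq_or_lt_of_le (abs_nonneg (t - t')) with h0 | h0
        · rw [← h0, Real.zero_rpow (by norm_num), Real.zero_rpow (ne_of_gt he0)]
        · exact Real.rpow_le_rpow_of_exponent_ge h0 hle he4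
      calc |v t w - v t' w| ≤ 3 * C * |t - t'| ^ ((1:ℝ)/4) := hq
        _ ≤ 3 * C * |t - t'| ^ e := by nlinarith
        _ ≤ (3*C + 2) * |t - t'| ^ e := by nlinarith
    · have hb : |v t w - v t' w| ≤ 2 := by
        have b1 := hbd t ht w
        have b2 := hbd t' ht' w
        calc |v t w - v t' w| ≤ |v t w| + |v t' w| := abs_sub _ _
          _ ≤ 2 := by linarith
      have h1 : (1:ℝ) ≤ |t - t'| ^ e := by
        calc (1:ℝ) = 1 ^ e := (Real.one_rpow e).symm
          _ ≤ |t - t'| ^ e := Real.rpow_le_rpow (by norm_num) hgt.le he0.le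
      nlinarith
  have tri : |v t u - v t' u'| ≤ |v t u - v t w| + |v t w - v t' w| := by
    calc |v t u - v t' u'| = |v t u - v t' w| := by rw [hvw]
      _ ≤ _ := abs_sub_le (v t u) (v t w) (v t' w)
  have hsq : Real.sqrt d = d ^ ((1:ℝ)/2) := Real.sqrt_eq_rpow d
  have hdnn : (0:ℝ) ≤ d ^ ((1:ℝ)/2) := Real.rpow_nonneg (hdd ▸ dist_nonneg) _
  have hrpnn : (0:ℝ) ≤ |t - t'| ^ e := Real.rpow_nonneg (abs_nonneg _) _
  calc |v t u - v t' u'| ≤ |v t u - v t w| + |v t w - v t' w| := tri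
    _ ≤ C * Real.sqrt d + (3*C + 2) * |t - t'| ^ e := by linarith
    _ ≤ (3*C + 2) * (|t - t'| ^ e + d ^ ((1:ℝ)/2)) := by
        rw [hsq]; nlinarith

end
end

section
/- Let m ≥ 2 be an integer, α ∈ (0,1), and let ρ : [0,T] × 𝕋 → (0,1) be a smooth solution of ∂_t ρ = ∂_{uu}(ρ^m). Define λ = log( ρ(1−α) / (α(1−ρ)) ). Then: (1) ∂_u λ = ∂_u ρ / (ρ(1−ρ)); (2) ∂_t λ = m ρ^{m−1} ∂_{uu} λ + m ρ^{m−1} (m − (m+1)ρ) (∂_u λ)²; equivalently, ∂_t λ = ∂_{uu} λ · h̄'(ρ) + (∂_u λ)² · ḡ'(ρ), where h̄(ρ) = ρ^m and ḡ(ρ) = m ρ^m (1−ρ). -/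
open MeasureTheory Set Function Filter
open scoped ContDiff

noncomputable section

lemma logit_hasDerivAt {α : ℝ} (hα : α ∈ Set.Ioo (0:ℝ) 1) {g : ℝ → ℝ} {g' x : ℝ}
    (hg : HasDerivAt g g' x) (hx : g x ∈ Set.Ioo (0:ℝ) 1) :
    HasDerivAt (fun y => Real.log (g y * (1 - α) / (α * (1 - g y))))
      (g' / (g x * (1 - g x))) x := by
  obtain ⟨ha0, ha1⟩ := hα
  obtain ⟨hx0, hx1⟩ := hx
  have hden : α * (1 - g x) ≠ 0 := by nlinarith
  have h1 : HasDerivAt (fun y => g y * (1 - α)) (g' * (1 - α)) x := hg.mul_const _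
  have h2 : HasDerivAt (fun y => α * (1 - g y)) (α * (0 - g')) x :=
    ((hasDerivAt_const x (1:ℝ)).sub hg).const_mul α
  have h3 := h1.div h2 hden
  have hq : g x * (1 - α) / (α * (1 - g x)) ≠ 0 := by
    apply ne_of_gt
    apply div_pos <;> nlinarith
  have h4 := h3.log hq
  have e0 : g x ≠ 0 := ne_of_gt hx0
  have e1 : (1:ℝ) - g x ≠ 0 := ne_of_gt (by linarith)
  have e2 : α ≠ 0 := ne_of_gt ha0
  have e3 : (1:ℝ) - α ≠ 0 := ne_of_gt (by linarith)
  refine h4.congr_deriv ?_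
  simp only [Pi.div_apply]
  field_simp
  ring

/-- **Identities for the logarithmic slowly-varying parameter.** For a smooth solution
`ρ : [0,T] × 𝕋 → (0,1)` of `∂_t ρ = ∂_uu (ρ^m)` and `α ∈ (0,1)`, setting
`λ = log(ρ(1-α)/(α(1-ρ)))`:
(1) `∂_u λ = ∂_u ρ / (ρ(1-ρ))`;
(2) `∂_t λ = m ρ^(m-1) ∂_uu λ + m ρ^(m-1) (m - (m+1)ρ) (∂_u λ)²`; equivalently
(3) `∂_t λ = ∂_uu λ · h̄'(ρ) + (∂_u λ)² · ḡ'(ρ)` with `h̄(r) = r^m`, `ḡ(r) = m r^m (1-r)`. -/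
theorem lambda_identities
    (m : ℕ) (hm : 2 ≤ m) (T : ℝ) (hT : 0 < T) (α : ℝ) (hα : α ∈ Ioo (0:ℝ) 1)
    (ρ : ℝ → ℝ → ℝ)
    (hsm : ContDiff ℝ (⊤ : ℕ∞) (uncurry ρ))
    (hper : ∀ t, Periodic (ρ t) 1)
    (hpde : ∀ t ∈ Icc (0:ℝ) T, ∀ u : ℝ,
      deriv (fun s => ρ s u) t = deriv (deriv (fun v => ρ t v ^ m)) u)
    (hbd : ∀ t ∈ Icc (0:ℝ) T, ∀ u : ℝ, ρ t u ∈ Ioo (0:ℝ) 1)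
    (lam : ℝ → ℝ → ℝ)
    (hlam : lam = fun t u => Real.log (ρ t u * (1 - α) / (α * (1 - ρ t u)))) :
    ∀ t ∈ Icc (0:ℝ) T, ∀ u : ℝ,
      (deriv (lam t) u = deriv (ρ t) u / (ρ t u * (1 - ρ t u))) ∧
      (deriv (fun s => lam s u) t =
          m * ρ t u ^ (m - 1) * deriv (deriv (lam t)) u
        + m * ρ t u ^ (m - 1) * ((m : ℝ) - (m + 1) * ρ t u) * (deriv (lam t) u) ^ 2) ∧
      (deriv (fun s => lam s u) t =
          deriv (deriv (lam t)) u * deriv (fun r : ℝ => r ^ m) (ρ t u)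
        + (deriv (lam t) u) ^ 2 * deriv (fun r : ℝ => m * r ^ m * (1 - r)) (ρ t u)) := by
  subst hlam
  intro t ht u
  obtain ⟨k, rfl⟩ : ∃ k, m = k + 2 := ⟨m - 2, by omega⟩
  -- smoothness of sections
  have hCu : ContDiff ℝ (⊤ : ℕ∞) (ρ t) := by
    have : ContDiff ℝ (⊤ : ℕ∞) (uncurry ρ ∘ fun v : ℝ => (t, v)) :=
      hsm.comp (contDiff_const.prodMk contDiff_id)
    exact this
  have hCt : ContDiff ℝ (⊤ : ℕ∞) (fun s => ρ s u) := by
    have : ContDiff ℝ (⊤ : ℕ∞) (uncurry ρ ∘ fun s : ℝ => (s, u)) :=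
      hsm.comp (contDiff_id.prodMk contDiff_const)
    exact this
  have hdρ : ∀ v : ℝ, HasDerivAt (ρ t) (deriv (ρ t) v) v := fun v =>
    ((hCu.differentiable (by simp)) v).hasDerivAt
  have hdρt : HasDerivAt (fun s => ρ s u) (deriv (fun s => ρ s u) t) t :=
    ((hCt.differentiable (by simp)) t).hasDerivAt
  have hCdu : ContDiff ℝ (∞ : WithTop ℕ∞) (deriv (ρ t)) := by
    have := (hCu.of_le (le_rfl : (∞ : WithTop ℕ∞) ≤ ((⊤ : ℕ∞) : WithTop ℕ∞))).iterate_deriv 1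
    simpa using this
  have hdd : ∀ v : ℝ, HasDerivAt (deriv (ρ t)) (deriv (deriv (ρ t)) v) v := fun v =>
    ((hCdu.differentiable (by simp)) v).hasDerivAt
  set r := ρ t u with hr
  set ru := deriv (ρ t) u with hru
  set ruu := deriv (deriv (ρ t)) u with hruu
  set rt := deriv (fun s => ρ s u) t with hrt
  obtain ⟨hr0, hr1⟩ := hbd t ht u
  have e0 : r ≠ 0 := ne_of_gt hr0
  have e1 : (1:ℝ) - r ≠ 0 := ne_of_gt (by linarith)
  -- Part (1)
  have part1all : ∀ v : ℝ,
      deriv ((fun t u => Real.log (ρ t u * (1 - α) / (α * (1 - ρ t u)))) t) v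
        = deriv (ρ t) v / (ρ t v * (1 - ρ t v)) := fun v =>
    (logit_hasDerivAt hα (hdρ v) (hbd t ht v)).deriv
  have part1 := part1all u
  refine ⟨part1, ?_, ?_⟩
  -- time derivative
  · have htime : deriv (fun s => (fun t u => Real.log (ρ t u * (1 - α) / (α * (1 - ρ t u)))) s u) t
        = rt / (r * (1 - r)) :=
      (logit_hasDerivAt hα hdρt (hbd t ht u)).deriv
    -- second space derivative of lam
    have hfun : deriv ((fun t u => Real.log (ρ t u * (1 - α) / (α * (1 - ρ t u)))) t)
        = fun v => deriv (ρ t) v / (ρ t v * (1 - ρ t v)) := funext part1all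
    have hden : HasDerivAt (fun v => ρ t v * (1 - ρ t v)) (ru * (1 - r) + r * (0 - ru)) u :=
      (hdρ u).mul ((hasDerivAt_const u (1:ℝ)).sub (hdρ u))
    have hdenne : r * (1 - r) ≠ 0 := mul_ne_zero e0 e1
    have hlamuu : HasDerivAt (fun v => deriv (ρ t) v / (ρ t v * (1 - ρ t v)))
        ((ruu * (r * (1 - r)) - ru * (ru * (1 - r) + r * (0 - ru))) / (r * (1 - r)) ^ 2) u :=
      (hdd u).div hden hdenne
    have h2nd : deriv (deriv ((fun t u => Real.log (ρ t u * (1 - α) / (α * (1 - ρ t u)))) t)) u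
        = (ruu * (r * (1 - r)) - ru * (ru * (1 - r) + r * (0 - ru))) / (r * (1 - r)) ^ 2 := by
      rw [hfun]; exact hlamuu.deriv
    -- PDE computation
    have hpowfun : deriv (fun v => ρ t v ^ (k + 2)) = fun v => ((k + 2 : ℕ) : ℝ) * ρ t v ^ ((k + 2) - 1) * deriv (ρ t) v :=
      funext fun v => ((hdρ v).pow (k + 2)).deriv
    have hsecond : HasDerivAt (fun v => ((k + 2 : ℕ) : ℝ) * ρ t v ^ ((k + 2) - 1) * deriv (ρ t) v)
        ((((k + 2 : ℕ) : ℝ) * (((k + 2) - 1 : ℕ) * ρ t u ^ ((k + 2) - 1 - 1) * ru)) * ru + (((k + 2 : ℕ) : ℝ) * r ^ ((k + 2) - 1)) * ruu) u :=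
      (((hdρ u).pow ((k + 2) - 1)).const_mul ((k + 2 : ℕ) : ℝ)).mul (hdd u)
    have hPDE : rt = (((k + 2 : ℕ) : ℝ) * (((k + 2) - 1 : ℕ) * r ^ ((k + 2) - 1 - 1) * ru)) * ru + (((k + 2 : ℕ) : ℝ) * r ^ ((k + 2) - 1)) * ruu := by
      rw [hrt, hpde t ht u, hpowfun]
      exact hsecond.deriv
    rw [htime, part1, h2nd, hPDE]
    simp only [show k + 2 - 1 = k + 1 from rfl, show k + 1 - 1 = k from rfl]
    push_cast
    field_simp
    ring
  -- part (3): rewrite derivatives of h̄ and ḡ, reduce to part (2)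
  · have htime : deriv (fun s => (fun t u => Real.log (ρ t u * (1 - α) / (α * (1 - ρ t u)))) s u) t
        = rt / (r * (1 - r)) :=
      (logit_hasDerivAt hα hdρt (hbd t ht u)).deriv
    have hh : deriv (fun x : ℝ => x ^ (k + 2)) r = ((k + 2 : ℕ) : ℝ) * r ^ ((k + 2) - 1) := by
      simpa using (hasDerivAt_pow (k + 2) r).deriv
    have hgder : HasDerivAt (fun x : ℝ => ((k + 2 : ℕ) : ℝ) * x ^ (k + 2) * (1 - x))
        ((((k + 2 : ℕ) : ℝ) * (((k + 2 : ℕ) : ℝ) * r ^ ((k + 2) - 1))) * (1 - r) + (((k + 2 : ℕ) : ℝ) * r ^ (k + 2)) * (0 - 1)) r :=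
      ((hasDerivAt_pow (k + 2) r).const_mul ((k + 2 : ℕ) : ℝ)).mul ((hasDerivAt_const r (1:ℝ)).sub (hasDerivAt_id' r))
    have hg : deriv (fun x : ℝ => ((k + 2 : ℕ) : ℝ) * x ^ (k + 2) * (1 - x)) r
        = (((k + 2 : ℕ) : ℝ) * (((k + 2 : ℕ) : ℝ) * r ^ ((k + 2) - 1))) * (1 - r) + (((k + 2 : ℕ) : ℝ) * r ^ (k + 2)) * (0 - 1) := hgder.deriv
    -- redo part 2 pieces
    have hfun : deriv ((fun t u => Real.log (ρ t u * (1 - α) / (α * (1 - ρ t u)))) t)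
        = fun v => deriv (ρ t) v / (ρ t v * (1 - ρ t v)) := funext part1all
    have hden : HasDerivAt (fun v => ρ t v * (1 - ρ t v)) (ru * (1 - r) + r * (0 - ru)) u :=
      (hdρ u).mul ((hasDerivAt_const u (1:ℝ)).sub (hdρ u))
    have hdenne : r * (1 - r) ≠ 0 := mul_ne_zero e0 e1
    have h2nd : deriv (deriv ((fun t u => Real.log (ρ t u * (1 - α) / (α * (1 - ρ t u)))) t)) u
        = (ruu * (r * (1 - r)) - ru * (ru * (1 - r) + r * (0 - ru))) / (r * (1 - r)) ^ 2 := by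
      rw [hfun]; exact ((hdd u).div hden hdenne).deriv
    have hpowfun : deriv (fun v => ρ t v ^ (k + 2)) = fun v => ((k + 2 : ℕ) : ℝ) * ρ t v ^ ((k + 2) - 1) * deriv (ρ t) v :=
      funext fun v => ((hdρ v).pow (k + 2)).deriv
    have hPDE : rt = (((k + 2 : ℕ) : ℝ) * (((k + 2) - 1 : ℕ) * r ^ ((k + 2) - 1 - 1) * ru)) * ru + (((k + 2 : ℕ) : ℝ) * r ^ ((k + 2) - 1)) * ruu := by
      rw [hrt, hpde t ht u, hpowfun]
      exact ((((hdρ u).pow ((k + 2) - 1)).const_mul ((k + 2 : ℕ) : ℝ)).mul (hdd u)).deriv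
    rw [htime, part1, h2nd, hh, hg, hPDE]
    simp only [show k + 2 - 1 = k + 1 from rfl, show k + 1 - 1 = k from rfl]
    push_cast
    field_simp
    ring

end
end

section
/- Fix T > 0, t ∈ [0,T], δ > 0 and integers ℓ, ℓ₀ ≥ 1. Let ρ : [0,T] × 𝕋 → [0,1] be continuous, and let (ρ_N)_{N∈ℕ} be continuous functions [0,T] × 𝕋 → [0,1] such that: (i) sup_{[0,T]×𝕋} |ρ_N − ρ| ≤ δ_N^{(1)} for a decreasing sequence δ_N^{(1)} → 0; (ii) there is a nondecreasing continuous modulus of continuity w : [0,1] → ℝ₊ with w(0) = 0 such that |ρ_N(t,u) − ρ_N(t,v)| ≤ w(d(u,v)) for all N, t, u, v, where d is the distance on 𝕋. Set δ_N = δ_N^{(1)} + w((ℓ+ℓ₀+1)/N), and assume (δ_N) is decreasing. For x ∈ 𝕋_N define G_t^{N,ℓ}(δ') = { x ∈ 𝕋_N : ρ_N(t,y) ≥ δ' for all y ∈ [(x−ℓ−ℓ₀)/N, (x+ℓ+ℓ₀)/N] } and Z_t^{N,ℓ}(α) = { x ∈ 𝕋_N : ρ_N(t,y) ≤ α for all y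 ∈ [(x−ℓ−ℓ₀)/N, (x+ℓ+ℓ₀)/N] }. Then (1) |G_t^{N,ℓ}(δ − δ_N)| / N → Leb( { u ∈ 𝕋 : ρ(t,u) ≥ δ } ) as N → ∞; and (2) if moreover the boundary of the positivity set { u : ρ(t,u) > 0 } has Lebesgue measure zero, then |Z_t^{N,ℓ}(δ_N)| / N → Leb( interior of { u ∈ 𝕋 : ρ(t,u) = 0 } ) as N → ∞. -/
open MeasureTheory Set Function Filter

noncomputable section

open scoped ENNReal

lemma dist_unitAddCircle_le (y u : ℝ) :
    dist ((y : UnitAddCircle)) ((u : UnitAddCircle)) ≤ |y - u| := by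
  rw [dist_eq_norm]
  have : ((y : UnitAddCircle)) - ((u : UnitAddCircle)) = (((y - u : ℝ)) : UnitAddCircle) := by
    norm_cast
  rw [this, AddCircle.norm_eq]
  simpa using round_le (y - u) 0

lemma vol_inter_Ioc_eq_Ico (S : Set ℝ) :
    volume (S ∩ Ioc (0:ℝ) 1) = volume (S ∩ Ico (0:ℝ) 1) := by
  apply le_antisymm
  · calc volume (S ∩ Ioc (0:ℝ) 1) ≤ volume ((S ∩ Ico (0:ℝ) 1) ∪ {1}) := by
          apply measure_mono
          rintro x ⟨hS, h0, h1⟩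
          rcases eq_or_lt_of_le h1 with h | h
          · exact Or.inr (by simp [h])
          · exact Or.inl ⟨hS, le_of_lt h0, h⟩
       _ ≤ volume (S ∩ Ico (0:ℝ) 1) + volume ({1} : Set ℝ) := measure_union_le _ _
       _ = volume (S ∩ Ico (0:ℝ) 1) := by simp
  · calc volume (S ∩ Ico (0:ℝ) 1) ≤ volume ((S ∩ Ioc (0:ℝ) 1) ∪ {0}) := by
          apply measure_mono
          rintro x ⟨hS, h0, h1⟩
          rcases eq_or_lt_of_le h0 with h | h
          · exact Or.inr (by simp [h.symm])
          · exact Or.inl ⟨hS, h, le_of_lt h1⟩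
       _ ≤ volume (S ∩ Ioc (0:ℝ) 1) + volume ({0} : Set ℝ) := measure_union_le _ _
       _ = volume (S ∩ Ioc (0:ℝ) 1) := by simp

lemma main_aux (ℓ ℓ₀ : ℕ) (f : ℝ → ℝ) (hf : Continuous f)
    (fN : ℕ → ℝ → ℝ) (c : ℝ)
    (δ1 : ℕ → ℝ) (hδ1 : ∀ N, 0 ≤ δ1 N) (hδ1lim : Tendsto δ1 atTop (nhds 0))
    (happrox : ∀ N u, |fN N u - f u| ≤ δ1 N)
    (w : ℝ → ℝ) (hwmono : MonotoneOn w (Icc (0:ℝ) 1)) (hw0 : w 0 = 0)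
    (hmod : ∀ N u v, |fN N u - fN N v| ≤ w (dist ((u : UnitAddCircle)) ((v : UnitAddCircle))))
    (δN : ℕ → ℝ)
    (hδN : ∀ N, δN N = δ1 N + w (((ℓ : ℝ) + ℓ₀ + 1) / N))
    (hδNanti : Antitone δN) (hδNlim : Tendsto δN atTop (nhds 0)) :
    Tendsto
      (fun N : ℕ =>
        (Nat.card {x : ℕ // x < N ∧
          ∀ y ∈ Icc (((x : ℝ) - ℓ - ℓ₀) / N) (((x : ℝ) + ℓ + ℓ₀) / N),
            c - δN N ≤ fN N y} : ℝ) / N)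
      atTop (nhds ((volume ({u : ℝ | c ≤ f u} ∩ Ioc (0:ℝ) 1)).toReal)) := by
  classical
  set P : ℕ → ℕ → Prop := fun N x =>
    ∀ y ∈ Icc (((x : ℝ) - ℓ - ℓ₀) / N) (((x : ℝ) + ℓ + ℓ₀) / N), c - δN N ≤ fN N y with hP
  set Tt : ℕ → Finset ℕ := fun N => (Finset.range N).filter (P N) with hTt
  set F : Set ℝ := {u : ℝ | c ≤ f u} with hF
  -- counting identity
  have hcard : ∀ N : ℕ, (Nat.card {x : ℕ // x < N ∧ P N x}) = (Tt N).card := by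
    intro N
    have hset : {x : ℕ | x < N ∧ P N x} = ↑(Tt N) := by
      ext x; simp [hTt, Finset.mem_filter, Finset.mem_range]
    rw [show {x : ℕ // x < N ∧ P N x} = ↥{x : ℕ | x < N ∧ P N x} from rfl,
      Nat.card_coe_set_eq, hset, Set.ncard_coe_finset]
  -- basic positivity facts
  have hδNpos : ∀ N, 0 ≤ δN N := fun N => hδNanti.le_of_tendsto hδNlim N
  -- the modulus of continuity passes to the limit f
  have hfmod : ∀ u v : ℝ, |f u - f v| ≤ w (dist ((u : UnitAddCircle)) ((v : UnitAddCircle))) := by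
    intro u v
    have hchain : ∀ N, |f u - f v| ≤ w (dist ((u : UnitAddCircle)) ((v : UnitAddCircle))) + 2 * δ1 N := by
      intro N
      have h1 := happrox N u
      have h2 := happrox N v
      have h3 := hmod N u v
      have a1 := abs_le.mp h1
      have a2 := abs_le.mp h2
      have a3 := abs_le.mp h3
      rw [abs_le]
      constructor <;> [skip; skip] <;> [linarith; linarith]
    have hlim : Tendsto (fun N => w (dist ((u : UnitAddCircle)) ((v : UnitAddCircle))) + 2 * δ1 N)
        atTop (nhds (w (dist ((u : UnitAddCircle)) ((v : UnitAddCircle))))) := by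
      simpa using tendsto_const_nhds.add (hδ1lim.const_mul 2)
    exact ge_of_tendsto' hlim hchain
  -- the approximating measurable sets
  set E : ℕ → Set ℝ := fun n => {u : ℝ | c - 2 * δN n ≤ f u} ∩ Ico (0:ℝ) 1 with hE
  have hEmeas : ∀ n, MeasurableSet (E n) := fun n =>
    (measurableSet_le measurable_const hf.measurable).inter measurableSet_Ico
  have hEfin : ∀ n, volume (E n) ≠ ∞ := by
    intro n
    have h1 : volume (E n) ≤ volume (Ico (0:ℝ) 1) := measure_mono inter_subset_right
    rw [Real.volume_Ico] at h1
    exact ne_top_of_le_ne_top (by simp) h1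
  have hEanti : Antitone E := by
    intro m n hmn u hu
    obtain ⟨hu1, hu2⟩ := hu
    refine ⟨?_, hu2⟩
    have := hδNanti hmn
    simp only [mem_setOf_eq] at hu1 ⊢
    linarith
  have hEiInter : ⋂ n, E n = F ∩ Ico (0:ℝ) 1 := by
    ext u
    simp only [mem_iInter, hE, mem_inter_iff, mem_setOf_eq, hF]
    constructor
    · intro h
      refine ⟨?_, (h 0).2⟩
      have hlim : Tendsto (fun n => c - 2 * δN n) atTop (nhds c) := by
        simpa using tendsto_const_nhds.sub (hδNlim.const_mul 2)
      exact le_of_tendsto' hlim (fun n => (h n).1)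
    · intro ⟨h1, h2⟩ n
      exact ⟨by have := hδNpos n; linarith, h2⟩
  have hElim : Tendsto (fun n => (volume (E n)).toReal) atTop
      (nhds ((volume (F ∩ Ioc (0:ℝ) 1)).toReal)) := by
    have h := tendsto_measure_iInter_atTop (fun n => (hEmeas n).nullMeasurableSet) hEanti
      ⟨0, hEfin 0⟩
    rw [hEiInter, ← vol_inter_Ioc_eq_Ico] at h
    have hfin : volume (F ∩ Ioc (0:ℝ) 1) ≠ ∞ := by
      have h1 : volume (F ∩ Ioc (0:ℝ) 1) ≤ volume (Ioc (0:ℝ) 1) := measure_mono inter_subset_right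
      rw [Real.volume_Ioc] at h1
      exact ne_top_of_le_ne_top (by simp) h1
    exact (ENNReal.tendsto_toReal hfin).comp h
  -- volume of grid intervals
  have hIcovol : ∀ (N : ℕ), 0 < N → ∀ x : ℕ,
      volume (Ico ((x:ℝ)/N) (((x:ℝ)+1)/N)) = ENNReal.ofReal (1/(N:ℝ)) := by
    intro N hN x
    have hNpos : (0:ℝ) < N := by exact_mod_cast hN
    rw [Real.volume_Ico]
    congr 1
    field_simp
    ring
  -- the eventual bounds
  have hbounds : ∀ N : ℕ, ℓ + ℓ₀ + 1 ≤ N →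
      (volume (F ∩ Ioc (0:ℝ) 1)).toReal ≤ ((Tt N).card : ℝ) / N ∧
      ((Tt N).card : ℝ) / N ≤ (volume (E N)).toReal := by
    intro N hN
    have hN0 : 0 < N := lt_of_lt_of_le (Nat.succ_pos _) hN
    have hNpos : (0:ℝ) < N := by exact_mod_cast hN0
    have hr0 : (0:ℝ) ≤ ((ℓ:ℝ) + ℓ₀ + 1)/N := by positivity
    have hrle1 : ((ℓ:ℝ) + ℓ₀ + 1)/N ≤ 1 := by
      rw [div_le_one hNpos]
      have : ((ℓ + ℓ₀ + 1 : ℕ) : ℝ) ≤ (N : ℝ) := by exact_mod_cast hN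
      push_cast at this
      linarith
    have hwr0 : 0 ≤ w (((ℓ:ℝ) + ℓ₀ + 1)/N) := by
      have := hwmono (left_mem_Icc.mpr zero_le_one) ⟨hr0, hrle1⟩ hr0
      rw [hw0] at this
      exact this
    -- a point close to the grid point x forces x ∈ Tt N
    have hgood : ∀ (x : ℕ) (u : ℝ), x < N → |(x:ℝ)/N - u| ≤ 1/N → c ≤ f u → x ∈ Tt N := by
      intro x u hxN hxu hcu
      refine Finset.mem_filter.mpr ⟨Finset.mem_range.mpr hxN, ?_⟩
      intro y hy
      obtain ⟨hy1, hy2⟩ := hy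
      have hy1' : (x:ℝ) - ℓ - ℓ₀ ≤ y * N := (div_le_iff₀ hNpos).mp hy1
      have hy2' : y * N ≤ (x:ℝ) + ℓ + ℓ₀ := (le_div_iff₀ hNpos).mp hy2
      have hxu' : |(x:ℝ) - u * N| ≤ 1 := by
        have h1 : |((x:ℝ)/N - u) * N| ≤ (1/N) * N := by
          rw [abs_mul, abs_of_pos hNpos]
          exact mul_le_mul_of_nonneg_right hxu (le_of_lt hNpos)
        rw [one_div_mul_cancel (ne_of_gt hNpos)] at h1
        have : ((x:ℝ)/N - u) * N = (x:ℝ) - u * N := by field_simp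
        rwa [this] at h1
      have hyu : |y - u| ≤ ((ℓ:ℝ) + ℓ₀ + 1)/N := by
        rw [abs_le]
        have hx1 := abs_le.mp hxu'
        constructor
        · rw [neg_le, ← sub_nonneg]
          have h2 : (u - y) * N ≤ (ℓ:ℝ) + ℓ₀ + 1 := by nlinarith
          have := (le_div_iff₀ hNpos).mpr h2
          linarith [this]
        · rw [← sub_nonneg]
          have h2 : (y - u) * N ≤ (ℓ:ℝ) + ℓ₀ + 1 := by nlinarith
          have := (le_div_iff₀ hNpos).mpr h2
          linarith [this]
      have hdist : dist ((y : UnitAddCircle)) ((u : UnitAddCircle)) ≤ ((ℓ:ℝ) + ℓ₀ + 1)/N :=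
        le_trans (dist_unitAddCircle_le y u) hyu
      have hwd : w (dist ((y : UnitAddCircle)) ((u : UnitAddCircle))) ≤ w (((ℓ:ℝ) + ℓ₀ + 1)/N) :=
        hwmono ⟨dist_nonneg, le_trans hdist hrle1⟩ ⟨hr0, hrle1⟩ hdist
      have h2 := abs_le.mp (hmod N y u)
      have h3 := abs_le.mp (happrox N u)
      rw [hδN N]
      linarith
    constructor
    · -- lower bound
      have hsub : F ∩ Ico (0:ℝ) 1 ⊆ ⋃ x ∈ Tt N, Ico ((x:ℝ)/N) (((x:ℝ)+1)/N) := by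
        rintro u ⟨hcu, hu0, hu1⟩
        set x : ℕ := ⌊(N:ℝ) * u⌋₊ with hx
        have hxle : (x:ℝ) ≤ (N:ℝ) * u := Nat.floor_le (by positivity)
        have hxlt : (N:ℝ) * u < (x:ℝ) + 1 := Nat.lt_floor_add_one _
        have hxN : x < N := by
          rw [hx]
          rw [Nat.floor_lt (by positivity)]
          calc (N:ℝ) * u < (N:ℝ) * 1 := by
                exact mul_lt_mul_of_pos_left hu1 hNpos
            _ = N := mul_one _
        refine mem_biUnion (hgood x u hxN ?_ hcu) ?_
        · have e1 : (x:ℝ)/N - u = ((x:ℝ) - N*u)/N := by field_simp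
          rw [e1, abs_div, abs_of_pos hNpos]
          apply (div_le_div_iff_of_pos_right hNpos).mpr
          rw [abs_le]
          exact ⟨by linarith, by linarith⟩
        · constructor
          · rw [div_le_iff₀ hNpos]; linarith [hxle]
          · rw [lt_div_iff₀ hNpos]; linarith [hxlt]
      have hcalc : volume (F ∩ Ico (0:ℝ) 1) ≤ (Tt N).card • ENNReal.ofReal (1/(N:ℝ)) := by
        calc volume (F ∩ Ico (0:ℝ) 1)
            ≤ volume (⋃ x ∈ Tt N, Ico ((x:ℝ)/N) (((x:ℝ)+1)/N)) := measure_mono hsub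
          _ ≤ ∑ x ∈ Tt N, volume (Ico ((x:ℝ)/N) (((x:ℝ)+1)/N)) := measure_biUnion_finset_le _ _
          _ = (Tt N).card • ENNReal.ofReal (1/(N:ℝ)) := by
              rw [Finset.sum_congr rfl (fun x _ => hIcovol N hN0 x), Finset.sum_const]
      have htr := ENNReal.toReal_mono (by
        rw [nsmul_eq_mul]
        exact ENNReal.mul_ne_top (ENNReal.natCast_ne_top _) ENNReal.ofReal_ne_top) hcalc
      rw [vol_inter_Ioc_eq_Ico]
      calc (volume (F ∩ Ico (0:ℝ) 1)).toReal
          ≤ ((Tt N).card • ENNReal.ofReal (1/(N:ℝ))).toReal := htr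
        _ = ((Tt N).card : ℝ) / N := by
            rw [nsmul_eq_mul, ENNReal.toReal_mul, ENNReal.toReal_natCast,
              ENNReal.toReal_ofReal (by positivity)]
            rw [mul_one_div]
    · -- upper bound
      have hdisj : (↑(Tt N) : Set ℕ).PairwiseDisjoint
          (fun x : ℕ => Ico ((x:ℝ)/N) (((x:ℝ)+1)/N)) := by
        intro a _ b _ hab
        have key : ∀ p q : ℕ, p < q →
            Disjoint (Ico ((p:ℝ)/N) (((p:ℝ)+1)/N)) (Ico ((q:ℝ)/N) (((q:ℝ)+1)/N)) := by
          intro p q hpq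
          rw [Set.Ico_disjoint_Ico]
          have h1 : ((p:ℝ)+1)/N ≤ (q:ℝ)/N := by
            apply (div_le_div_iff_of_pos_right hNpos).mpr
            exact_mod_cast Nat.succ_le_of_lt hpq
          exact le_trans (min_le_left _ _) (le_trans h1 (le_max_right _ _))
        rcases lt_or_gt_of_ne hab with h | h
        · exact key a b h
        · exact (key b a h).symm
      have hunion_sub : (⋃ x ∈ Tt N, Ico ((x:ℝ)/N) (((x:ℝ)+1)/N)) ⊆ E N := by
        intro u hu
        rw [mem_iUnion₂] at hu
        obtain ⟨x, hxT, hxu⟩ := hu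
        obtain ⟨hxr, hPx⟩ := Finset.mem_filter.mp hxT
        have hxN : x < N := Finset.mem_range.mp hxr
        obtain ⟨hu1, hu2⟩ := hxu
        have hu0 : (0:ℝ) ≤ u := le_trans (by positivity) hu1
        have hule : u < 1 := by
          have : ((x:ℝ)+1)/N ≤ 1 := by
            rw [div_le_one hNpos]
            exact_mod_cast Nat.succ_le_of_lt hxN
          linarith
        refine ⟨?_, hu0, hule⟩
        -- show c - 2 δN N ≤ f u
        have hmemIcc : (x:ℝ)/N ∈ Icc (((x:ℝ) - ℓ - ℓ₀)/N) (((x:ℝ) + ℓ + ℓ₀)/N) := by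
          constructor
          · apply (div_le_div_iff_of_pos_right hNpos).mpr
            have : (0:ℝ) ≤ (ℓ:ℝ) + ℓ₀ := by positivity
            linarith
          · apply (div_le_div_iff_of_pos_right hNpos).mpr
            have : (0:ℝ) ≤ (ℓ:ℝ) + ℓ₀ := by positivity
            linarith
        have h1 : c - δN N ≤ fN N ((x:ℝ)/N) := hPx _ hmemIcc
        have h2 := abs_le.mp (happrox N ((x:ℝ)/N))
        have hdu : |(x:ℝ)/N - u| ≤ ((ℓ:ℝ) + ℓ₀ + 1)/N := by
          have e1 : (x:ℝ)/N - u = ((x:ℝ) - N*u)/N := by field_simp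
          have hu1' : (x:ℝ) ≤ N * u := by
            have := (div_le_iff₀ hNpos).mp hu1
            linarith
          have hu2' : N * u < (x:ℝ) + 1 := by
            have := (lt_div_iff₀ hNpos).mp hu2
            linarith
          have hl1 : (0:ℝ) ≤ (ℓ:ℝ) := by positivity
          have hl2 : (0:ℝ) ≤ (ℓ₀:ℝ) := by positivity
          rw [e1, abs_div, abs_of_pos hNpos]
          apply (div_le_div_iff_of_pos_right hNpos).mpr
          rw [abs_le]
          exact ⟨by linarith, by linarith⟩
        have hdist : dist (((x:ℝ)/N : ℝ) : UnitAddCircle) ((u : UnitAddCircle)) ≤ ((ℓ:ℝ) + ℓ₀ + 1)/N :=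
          le_trans (dist_unitAddCircle_le _ _) hdu
        have hwd : w (dist (((x:ℝ)/N : ℝ) : UnitAddCircle) ((u : UnitAddCircle))) ≤ w (((ℓ:ℝ) + ℓ₀ + 1)/N) :=
          hwmono ⟨dist_nonneg, le_trans hdist hrle1⟩ ⟨hr0, hrle1⟩ hdist
        have h3 := abs_le.mp (hfmod ((x:ℝ)/N) u)
        have hδNeq := hδN N
        simp only [mem_setOf_eq]
        linarith
      have hcalc : (Tt N).card • ENNReal.ofReal (1/(N:ℝ)) ≤ volume (E N) := by
        calc (Tt N).card • ENNReal.ofReal (1/(N:ℝ))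
            = ∑ x ∈ Tt N, volume (Ico ((x:ℝ)/N) (((x:ℝ)+1)/N)) := by
              rw [Finset.sum_congr rfl (fun x _ => hIcovol N hN0 x), Finset.sum_const]
          _ = volume (⋃ x ∈ Tt N, Ico ((x:ℝ)/N) (((x:ℝ)+1)/N)) :=
              (measure_biUnion_finset hdisj (fun _ _ => measurableSet_Ico)).symm
          _ ≤ volume (E N) := measure_mono hunion_sub
      have htr := ENNReal.toReal_mono (hEfin N) hcalc
      calc ((Tt N).card : ℝ) / N
          = ((Tt N).card • ENNReal.ofReal (1/(N:ℝ))).toReal := by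
            rw [nsmul_eq_mul, ENNReal.toReal_mul, ENNReal.toReal_natCast,
              ENNReal.toReal_ofReal (by positivity), mul_one_div]
        _ ≤ (volume (E N)).toReal := htr
  -- conclude by squeezing
  have hfinal : Tendsto (fun N : ℕ => ((Tt N).card : ℝ) / N) atTop
      (nhds ((volume (F ∩ Ioc (0:ℝ) 1)).toReal)) := by
    apply tendsto_of_tendsto_of_tendsto_of_le_of_le' tendsto_const_nhds hElim
    · filter_upwards [eventually_ge_atTop (ℓ + ℓ₀ + 1)] with N hN
      exact (hbounds N hN).1
    · filter_upwards [eventually_ge_atTop (ℓ + ℓ₀ + 1)] with N hN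
      exact (hbounds N hN).2
  exact hfinal.congr (fun N => by rw [← hcard N])

/-- **Convergence of the good and almost-zero boxes.** Let `ρ_N → ρ` uniformly on `[0,T] × 𝕋`
with an error `δ_N^{(1)}` and a uniform-in-`N` modulus of continuity `w`; set
`δ_N = δ_N^{(1)} + w((ℓ+ℓ₀+1)/N)` and assume `(δ_N)` is decreasing. Then
(1) `|G_t^{N,ℓ}(δ-δ_N)|/N → Leb{u ∈ 𝕋 : ρ(t,u) ≥ δ}`, and
(2) if the boundary of the positivity set of `ρ(t,·)` is Lebesgue-null, then
`|Z_t^{N,ℓ}(δ_N)|/N → Leb(interior{u ∈ 𝕋 : ρ(t,u) = 0})`.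
The torus is represented by `1`-periodic functions on `ℝ`, with its measure computed on the
period window `(0,1]`. -/
theorem good_and_zero_boxes_convergence
    (T : ℝ) (hT : 0 < T) (t : ℝ) (ht : t ∈ Icc (0:ℝ) T)
    (δ : ℝ) (hδ : 0 < δ) (ℓ ℓ₀ : ℕ) (hℓ : 1 ≤ ℓ) (hℓ₀ : 1 ≤ ℓ₀)
    -- the limit profile
    (ρ : ℝ → ℝ → ℝ)
    (hρper : ∀ s, Periodic (ρ s) 1)
    (hρbd : ∀ s ∈ Icc (0:ℝ) T, ∀ u : ℝ, ρ s u ∈ Icc (0:ℝ) 1)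
    (hρcont : ContinuousOn (uncurry ρ) (Icc (0:ℝ) T ×ˢ univ))
    -- the approximating profiles
    (ρN : ℕ → ℝ → ℝ → ℝ)
    (hρNper : ∀ N s, Periodic (ρN N s) 1)
    (hρNbd : ∀ N, ∀ s ∈ Icc (0:ℝ) T, ∀ u : ℝ, ρN N s u ∈ Icc (0:ℝ) 1)
    (hρNcont : ∀ N, ContinuousOn (uncurry (ρN N)) (Icc (0:ℝ) T ×ˢ univ))
    -- (i) uniform convergence with decreasing error δ_N^{(1)} → 0
    (δ1 : ℕ → ℝ) (hδ1anti : Antitone δ1) (hδ1lim : Tendsto δ1 atTop (nhds 0))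
    (happrox : ∀ N, ∀ s ∈ Icc (0:ℝ) T, ∀ u : ℝ, |ρN N s u - ρ s u| ≤ δ1 N)
    -- (ii) a common modulus of continuity
    (w : ℝ → ℝ) (hwmono : MonotoneOn w (Icc (0:ℝ) 1))
    (hwcont : ContinuousOn w (Icc (0:ℝ) 1)) (hw0 : w 0 = 0)
    (hmod : ∀ N, ∀ s ∈ Icc (0:ℝ) T, ∀ u v : ℝ,
      |ρN N s u - ρN N s v| ≤ w (dist ((u : UnitAddCircle)) ((v : UnitAddCircle))))
    -- the sequence δ_N
    (δN : ℕ → ℝ)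
    (hδN : δN = fun N : ℕ => δ1 N + w (((ℓ : ℝ) + ℓ₀ + 1) / N))
    (hδNanti : Antitone δN) :
    Tendsto
      (fun N : ℕ =>
        (Nat.card {x : ℕ // x < N ∧
          ∀ y ∈ Icc (((x : ℝ) - ℓ - ℓ₀) / N) (((x : ℝ) + ℓ + ℓ₀) / N),
            δ - δN N ≤ ρN N t y} : ℝ) / N)
      atTop (nhds ((volume ({u : ℝ | δ ≤ ρ t u} ∩ Ioc (0:ℝ) 1)).toReal)) ∧
    (volume (frontier {u : ℝ | 0 < ρ t u} ∩ Ioc (0:ℝ) 1) = 0 →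
      Tendsto
        (fun N : ℕ =>
          (Nat.card {x : ℕ // x < N ∧
            ∀ y ∈ Icc (((x : ℝ) - ℓ - ℓ₀) / N) (((x : ℝ) + ℓ + ℓ₀) / N),
              ρN N t y ≤ δN N} : ℝ) / N)
        atTop (nhds ((volume (interior {u : ℝ | ρ t u = 0} ∩ Ioc (0:ℝ) 1)).toReal))) := by
  -- continuity of the profile at time t
  have hρt : Continuous (fun u : ℝ => ρ t u) := by
    have := hρcont.comp_continuous (Continuous.prodMk continuous_const continuous_id)
      (fun u => Set.mk_mem_prod ht (mem_univ u))
    exact this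
  have hρtnonneg : ∀ u : ℝ, 0 ≤ ρ t u := fun u => (hρbd t ht u).1
  -- limit of δN
  have hδ1pos : ∀ N, 0 ≤ δ1 N := fun N => hδ1anti.le_of_tendsto hδ1lim N
  have hδNeq : ∀ N, δN N = δ1 N + w (((ℓ : ℝ) + ℓ₀ + 1) / N) := fun N => congrFun hδN N
  have hδNlim : Tendsto δN atTop (nhds 0) := by
    rw [hδN]
    have h1 : Tendsto (fun N : ℕ => ((ℓ : ℝ) + ℓ₀ + 1) / N) atTop (nhds 0) :=
      tendsto_const_div_atTop_nhds_zero_nat _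
    have h2 : Tendsto (fun N : ℕ => w (((ℓ : ℝ) + ℓ₀ + 1) / N)) atTop (nhds 0) := by
      have hcw : ContinuousWithinAt w (Icc (0:ℝ) 1) 0 :=
        hwcont 0 (left_mem_Icc.mpr zero_le_one)
      have h3 : Tendsto (fun N : ℕ => ((ℓ : ℝ) + ℓ₀ + 1) / N) atTop
          (nhdsWithin 0 (Icc (0:ℝ) 1)) := by
        apply tendsto_nhdsWithin_of_tendsto_nhds_of_eventually_within _ h1
        filter_upwards [eventually_ge_atTop (ℓ + ℓ₀ + 1)] with N hN
        have hN0 : 0 < N := lt_of_lt_of_le (Nat.succ_pos _) hN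
        have hNpos : (0:ℝ) < N := by exact_mod_cast hN0
        constructor
        · positivity
        · rw [div_le_one hNpos]
          have : ((ℓ + ℓ₀ + 1 : ℕ) : ℝ) ≤ (N : ℝ) := by exact_mod_cast hN
          push_cast at this
          linarith
      have := hcw.tendsto.comp h3
      rwa [hw0] at this
    simpa using hδ1lim.add h2
  constructor
  · -- Part (1)
    exact main_aux ℓ ℓ₀ (fun u => ρ t u) hρt (fun N => ρN N t) δ δ1 hδ1pos hδ1lim
      (fun N u => happrox N t ht u) w hwmono hw0 (fun N u v => hmod N t ht u v)
      δN hδNeq hδNanti hδNlim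
  · -- Part (2)
    intro hfront
    have haux := main_aux ℓ ℓ₀ (fun u => -(ρ t u)) hρt.neg (fun N u => -(ρN N t u)) 0 δ1
      hδ1pos hδ1lim
      (fun N u => by
        have := happrox N t ht u
        rw [show -(ρN N t u) - -(ρ t u) = -(ρN N t u - ρ t u) by ring, abs_neg]
        exact this)
      w hwmono hw0
      (fun N u v => by
        have := hmod N t ht u v
        rw [show -(ρN N t u) - -(ρN N t v) = -(ρN N t u - ρN N t v) by ring, abs_neg]
        exact this)
      δN hδNeq hδNanti hδNlim
    -- rewrite the target measure
    have hset : {u : ℝ | (0:ℝ) ≤ -(ρ t u)} = {u : ℝ | ρ t u = 0} := by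
      ext u
      simp only [mem_setOf_eq]
      constructor
      · intro h
        exact le_antisymm (by linarith) (hρtnonneg u)
      · intro h
        rw [h]; simp
    rw [hset] at haux
    -- the zero set and the interior of the zero set have the same measure
    have hzero_closed : {u : ℝ | ρ t u = 0} = {u : ℝ | 0 < ρ t u}ᶜ := by
      ext u
      simp only [mem_setOf_eq, mem_compl_iff, not_lt]
      constructor
      · intro h; rw [h]
      · intro h; exact le_antisymm h (hρtnonneg u)
    have hmeq : volume ({u : ℝ | ρ t u = 0} ∩ Ioc (0:ℝ) 1) =
        volume (interior {u : ℝ | ρ t u = 0} ∩ Ioc (0:ℝ) 1) := by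
      apply le_antisymm
      · calc volume ({u : ℝ | ρ t u = 0} ∩ Ioc (0:ℝ) 1)
            ≤ volume ((interior {u : ℝ | ρ t u = 0} ∩ Ioc (0:ℝ) 1) ∪
                (frontier {u : ℝ | 0 < ρ t u} ∩ Ioc (0:ℝ) 1)) := by
              apply measure_mono
              rintro u ⟨hu, huI⟩
              by_cases hint : u ∈ interior {u : ℝ | ρ t u = 0}
              · exact Or.inl ⟨hint, huI⟩
              · refine Or.inr ⟨?_, huI⟩
                have h1 : u ∈ closure {u : ℝ | ρ t u = 0} := subset_closure hu
                have h2 : u ∈ frontier {u : ℝ | ρ t u = 0} := ⟨h1, hint⟩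
                rwa [hzero_closed, frontier_compl] at h2
          _ ≤ volume (interior {u : ℝ | ρ t u = 0} ∩ Ioc (0:ℝ) 1) +
                volume (frontier {u : ℝ | 0 < ρ t u} ∩ Ioc (0:ℝ) 1) := measure_union_le _ _
          _ = volume (interior {u : ℝ | ρ t u = 0} ∩ Ioc (0:ℝ) 1) := by rw [hfront, add_zero]
      · exact measure_mono (inter_subset_inter_left _ interior_subset)
    rw [hmeq] at haux
    -- identify the two counts
    refine haux.congr (fun N => ?_)
    congr 2
    apply Nat.card_congr
    apply Equiv.subtypeEquivRight
    intro x
    constructor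
    · rintro ⟨h1, h2⟩
      exact ⟨h1, fun y hy => by have := h2 y hy; linarith⟩
    · rintro ⟨h1, h2⟩
      exact ⟨h1, fun y hy => by have := h2 y hy; linarith⟩

end
end
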